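/- arXiv:1410.0297 — 10 statements merged into one kernel-verified Lean document; each statement's English description precedes it below -/
import Mathlib

section
/- Fix integers c ≥ 0 and b ≥ 2, and let m be a positive integer such that b^m > b^2 - 3b + 3 + c. Then for every positive integer a with a ≥ b^m, we have S_{[c,b]}(a) < a. -/
/-!
Write `a = b q + r` with `r = a % b`, so that `S c b a = c + r² + T q`, where `T` is the sum of
the squared base-`b` digits. A digit `d` in position `i` contributes `d²` to `T` but `d bⁱ` to the
number, and induction on the digits turns this into `T q + b ^ (n + 1) ≤ b q + 1` whenever
`bⁿ ≤ q`. For `q ≥ b ^ (m - 1)` this gives `S c b a + b ^ m ≤ c + r² - r + 1 + a`, and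
`r² - r ≤ (b - 1)(b - 2)` turns the hypothesis on `b ^ m` into `S c b a < a`.
-/

/-- The augmented generalized happy function `S_{[c,b]}`: it maps `a` to `c` plus the
sum of the squares of the base-`b` digits of `a`. -/
def S (c b a : ℕ) : ℕ := c + ((Nat.digits b a).map (· ^ 2)).sum

def digitSquareSum (b a : ℕ) : ℕ := ((Nat.digits b a).map (· ^ 2)).sum

lemma digitSquareSum_of_pos {b a : ℕ} (hb : 1 < b) (ha : 0 < a) :
    digitSquareSum b a = (a % b) ^ 2 + digitSquareSum b (a / b) := by
  simp [digitSquareSum, Nat.digits_def' hb ha]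

lemma digitSquareSum_add_pow_le {b : ℕ} (hb : 1 < b) {n q : ℕ} (hq : b ^ n ≤ q) :
    digitSquareSum b q + b ^ (n + 1) ≤ b * q + 1 := by
  induction q using Nat.strong_induction_on generalizing n with
  | _ q ih =>
  have hq0 : 0 < q := (Nat.one_le_pow _ _ (by omega)).trans hq
  rw [digitSquareSum_of_pos hb hq0]
  obtain hqb | hbq := lt_or_ge q b
  · obtain rfl : n = 0 := by
      by_contra hn
      exact absurd ((Nat.le_self_pow hn b).trans hq) (not_le.2 hqb)
    rw [Nat.mod_eq_of_lt hqb, Nat.div_eq_of_lt hqb]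
    simp only [digitSquareSum, Nat.digits_zero, List.map_nil, List.sum_nil, zero_add, pow_one]
    zify at hqb hq0 ⊢
    have : (0 : ℤ) ≤ (q - 1) * (b - 1 - q) := mul_nonneg (by omega) (by omega)
    nlinarith
  · obtain ⟨k, hkq, hnk⟩ : ∃ k, b ^ k ≤ q / b ∧ b ^ n ≤ b ^ (k + 1) := by
      cases n with
      | zero => exact ⟨0, by simpa using (Nat.one_le_div_iff (by omega)).2 hbq, by simp; omega⟩
      | succ k => exact ⟨k, (Nat.le_div_iff_mul_le (by omega)).2 (by rwa [← pow_succ]), le_rfl⟩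
    have ih' := ih (q / b) (Nat.div_lt_self hq0 hb) hkq
    have hqk : b ^ (k + 1) ≤ b * (q / b) := by rw [pow_succ']; exact Nat.mul_le_mul_left b hkq
    have hr : q % b < b := Nat.mod_lt _ (by omega)
    have hdiv := Nat.div_add_mod q b
    have hr2 : (q % b) ^ 2 ≤ b * (q % b) := by rw [sq]; exact Nat.mul_le_mul_right _ hr.le
    have hbn : b * b ^ n ≤ b * b ^ (k + 1) := Nat.mul_le_mul_left b hnk
    have hsh : b * b ^ (k + 1) + b * (q / b) ≤ b * (b * (q / b)) + b ^ (k + 1) := by nlinarith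
    have hbq_eq : b * q = b * (b * (q / b)) + b * (q % b) := by rw [← mul_add, hdiv]
    rw [pow_succ' b n]
    linarith

theorem stmt_0 (c b m : ℕ) (hb : 2 ≤ b) (hm : 0 < m)
    (hbm : (b : ℤ) ^ m > (b : ℤ) ^ 2 - 3 * b + 3 + c) :
    ∀ a : ℕ, 0 < a → b ^ m ≤ a → S c b a < a := by
  intro a ha hba
  obtain ⟨n, rfl⟩ : ∃ n, m = n + 1 := ⟨m - 1, by omega⟩
  have hq : b ^ n ≤ a / b := (Nat.le_div_iff_mul_le (by omega)).2 (by rwa [← pow_succ])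
  have hT := digitSquareSum_add_pow_le (by omega) hq
  have hdiv := Nat.div_add_mod a b
  have hr : a % b < b := Nat.mod_lt _ (by omega)
  change c + digitSquareSum b a < a
  rw [digitSquareSum_of_pos (by omega) ha]
  generalize a / b = q at hT hdiv
  generalize a % b = r at hr hdiv ⊢
  have hr2 : (r : ℤ) ^ 2 - r ≤ ((b : ℤ) - 1) * (b - 2) := by
    have : (0 : ℤ) ≤ (b - 1 - r) * (b - 2 + r) := mul_nonneg (by omega) (by omega)
    nlinarith
  zify at hT hdiv ⊢
  linarith
end

section
/- Fix integers c ≥ 0 and b ≥ 2. Every positive integer a is attracted to a periodic point of S_{[c,b]}: there exist an integer k ≥ 0 and a positive integer u with S_{[c,b]}^m(u) = u for some m ≥ 1, such that S_{[c,b]}^k(a) = u. -/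
/-!
Every digit is at most `b - 1`, so the digits of `x / b` contribute at most `(b - 1) * (x / b)`
and the last digit at most `(b - 1) ^ 2`. Hence `S_{[c,b]} x ≤ max x (b * (c + (b - 1) ^ 2))`,
so every interval `[1, B]` with `B ≥ b * (c + (b - 1) ^ 2)` is mapped into itself (positivity
comes from the nonzero leading digit). An orbit confined to a finite set repeats a value, and
from that point on it is periodic.
-/

open Function Set in
theorem Set.MapsTo.exists_iterate_mem_periodicPts {α : Type*} {f : α → α} {s : Set α}
    (hf : MapsTo f s s) (hs : s.Finite) {x : α} (hx : x ∈ s) :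
    ∃ k, f^[k] x ∈ periodicPts f := by
  obtain ⟨m, n, hmn, heq⟩ :=
    hs.exists_lt_map_eq_of_forall_mem (f := fun n ↦ f^[n] x) fun n ↦ hf.iterate n hx
  refine ⟨m, mk_mem_periodicPts (Nat.sub_pos_of_lt hmn) ?_⟩
  rw [IsPeriodicPt, IsFixedPt, ← iterate_add_apply, Nat.sub_add_cancel hmn.le]
  exact heq.symm

namespace Nat

theorem sum_sq_digits_le {b : ℕ} (hb : 1 < b) (x : ℕ) :
    ((digits b x).map (· ^ 2)).sum ≤ (b - 1) * x :=
  calc ((digits b x).map (· ^ 2)).sum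
      ≤ ((digits b x).map ((b - 1) * ·)).sum := by
        refine List.sum_le_sum fun d hd ↦ ?_
        rw [sq]
        exact Nat.mul_le_mul_right d (Nat.le_sub_one_of_lt (digits_lt_base hb hd))
    _ = (b - 1) * (digits b x).sum := by simpa using List.sum_map_mul_left (digits b x) id (b - 1)
    _ ≤ (b - 1) * x := Nat.mul_le_mul_left _ (digit_sum_le b x)

theorem sum_sq_digits_le_sq_add {b : ℕ} (hb : 1 < b) (x : ℕ) :
    ((digits b x).map (· ^ 2)).sum ≤ (b - 1) ^ 2 + (b - 1) * (x / b) := by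
  rcases eq_zero_or_pos x with rfl | hx
  · simp
  rw [digits_def' hb hx, List.map_cons, List.sum_cons]
  gcongr
  · exact Nat.le_sub_one_of_lt (mod_lt x (by omega))
  · exact sum_sq_digits_le hb _

theorem sum_sq_digits_pos {b x : ℕ} (hx : x ≠ 0) : 0 < ((digits b x).map (· ^ 2)).sum := by
  have hne : digits b x ≠ [] := digits_ne_nil_iff_ne_zero.2 hx
  refine List.sum_pos_iff_exists_pos_nat.2 ⟨_, List.mem_map_of_mem (List.getLast_mem hne), ?_⟩
  exact pow_pos (pos_of_ne_zero (getLast_digit_ne_zero b hx)) 2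

end Nat

section AugmentedHappy

open Set

variable {c b : ℕ}

theorem S_pos {x : ℕ} (hx : x ≠ 0) : 0 < S c b x :=
  Nat.add_pos_right c (Nat.sum_sq_digits_pos hx)

theorem S_le_max (hb : 1 < b) (x : ℕ) : S c b x ≤ max x (b * (c + (b - 1) ^ 2)) := by
  set K := c + (b - 1) ^ 2
  have hS : S c b x ≤ K + (b - 1) * (x / b) := by
    have := Nat.sum_sq_digits_le_sq_add hb x
    unfold S
    omega
  calc S c b x ≤ K + (b - 1) * (x / b) := hS
    _ ≤ max (x / b) K + (b - 1) * max (x / b) K := by gcongr <;> simp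
    _ = b * max (x / b) K := by
        rw [add_comm, ← Nat.succ_mul, Nat.succ_eq_add_one, Nat.sub_add_cancel hb.le]
    _ = max (b * (x / b)) (b * K) := mul_max_of_nonneg _ _ (Nat.zero_le b)
    _ ≤ max x (b * K) := max_le_max (Nat.mul_div_le x b) le_rfl

theorem mapsTo_S_Icc (hb : 1 < b) {B : ℕ} (hB : b * (c + (b - 1) ^ 2) ≤ B) :
    MapsTo (S c b) (Icc 1 B) (Icc 1 B) := fun x hx ↦
  ⟨S_pos (Nat.one_le_iff_ne_zero.1 hx.1), (S_le_max hb x).trans (max_le hx.2 hB)⟩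

end AugmentedHappy

theorem stmt_1 (c b : ℕ) (hb : 2 ≤ b) :
    ∀ a : ℕ, 0 < a → ∃ (k : ℕ) (u : ℕ), 0 < u ∧
      (∃ m, 0 < m ∧ (S c b)^[m] u = u) ∧ (S c b)^[k] a = u := by
  intro a ha
  set B := max a (b * (c + (b - 1) ^ 2))
  have hS : Set.MapsTo (S c b) (Set.Icc 1 B) (Set.Icc 1 B) := mapsTo_S_Icc hb (le_max_right _ _)
  have ha' : a ∈ Set.Icc 1 B := ⟨ha, le_max_left _ _⟩
  obtain ⟨k, hk⟩ := hS.exists_iterate_mem_periodicPts (Set.finite_Icc 1 B) ha'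
  obtain ⟨m, hm, hper⟩ := Function.mem_periodicPts.1 hk
  exact ⟨k, _, (hS.iterate k ha').1, ⟨m, hm, hper⟩, rfl⟩
end

section
/- Fix integers c ≥ 0 and b ≥ 2 with both c and b odd. Then S_{[c,b]} has no fixed points: there is no positive integer a with S_{[c,b]}(a) = a. -/
theorem Nat.sq_modEq_self_two (x : ℕ) : x ^ 2 ≡ x [MOD 2] := by
  rw [Nat.ModEq, Nat.pow_mod]
  rcases Nat.mod_two_eq_zero_or_one x with h | h <;> simp [h]

theorem S_modEq_add_two (c : ℕ) {b : ℕ} (hb : Odd b) (a : ℕ) : S c b a ≡ c + a [MOD 2] := by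
  have hsq : ((Nat.digits b a).map (· ^ 2)).sum ≡ (Nat.digits b a).sum [MOD 2] := by
    simpa using Nat.ModEq.listSum_map (g := id) fun x _ => Nat.sq_modEq_self_two x
  exact (hsq.trans (Nat.modEq_digits_sum 2 b (Nat.odd_iff.mp hb) a).symm).add_left c

theorem stmt_3_general (c b : ℕ) (hc : Odd c) (hbo : Odd b) :
    ¬ ∃ a : ℕ, 0 < a ∧ S c b a = a := by
  rintro ⟨a, -, hfix⟩
  have hmod := S_modEq_add_two c hbo a
  rw [hfix, Nat.ModEq] at hmod
  have hc2 := Nat.odd_iff.mp hc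
  omega

theorem stmt_3 (c b : ℕ) (hb : 2 ≤ b) (hc : Odd c) (hbo : Odd b) :
    ¬ ∃ a : ℕ, 0 < a ∧ S c b a = a :=
  stmt_3_general c b hc hbo
end

section
/- Fix integers c ≥ 0 and b ≥ 2 with both c and b odd. Then every cycle of S_{[c,b]} has even length: if a is a positive integer and k is a positive integer with S_{[c,b]}^k(a) = a, then k is even. -/
lemma Nat.sq_modEq_two (d : ℕ) : d ^ 2 ≡ d [MOD 2] := by
  rcases Nat.mod_two_eq_zero_or_one d with h | h <;> simp [Nat.ModEq, Nat.pow_mod, h]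

lemma List.sum_map_sq_modEq_two (l : List ℕ) : (l.map (· ^ 2)).sum ≡ l.sum [MOD 2] := by
  induction l with
  | nil => rfl
  | cons d l ih => simpa using (Nat.sq_modEq_two d).add ih

lemma sum_sq_digits_modEq_two {b : ℕ} (hb : Odd b) (a : ℕ) :
    ((Nat.digits b a).map (· ^ 2)).sum ≡ a [MOD 2] :=
  (List.sum_map_sq_modEq_two _).trans
    (Nat.modEq_digits_sum 2 b (Nat.odd_iff.mp hb) a).symm

lemma S_modEq_add_one {c b : ℕ} (hc : Odd c) (hb : Odd b) (a : ℕ) : S c b a ≡ a + 1 [MOD 2] := by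
  have hc' : c ≡ 1 [MOD 2] := Nat.odd_iff.mp hc
  rw [S, add_comm a]
  exact hc'.add (sum_sq_digits_modEq_two hb a)

lemma iterate_modEq_add_of_modEq_add_one {f : ℕ → ℕ} (hf : ∀ n, f n ≡ n + 1 [MOD 2]) (k a : ℕ) :
    f^[k] a ≡ a + k [MOD 2] := by
  induction k with
  | zero => rfl
  | succ k ih =>
    rw [Function.iterate_succ_apply', ← add_assoc]
    exact (hf _).trans (ih.add_right 1)

lemma even_of_isPeriodicPt_of_modEq_add_one {f : ℕ → ℕ} (hf : ∀ n, f n ≡ n + 1 [MOD 2])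
    {k a : ℕ} (h : Function.IsPeriodicPt f k a) : Even k := by
  have hk : a + 0 ≡ a + k [MOD 2] := by
    simpa [h.eq] using iterate_modEq_add_of_modEq_add_one hf k a
  exact Nat.even_iff.mpr (Nat.ModEq.add_left_cancel' a hk).symm

theorem stmt_4_general (c b : ℕ) (hc : Odd c) (hbo : Odd b) :
    ∀ a k : ℕ, 0 < a → 0 < k → (S c b)^[k] a = a → Even k :=
  fun _ _ _ _ h => even_of_isPeriodicPt_of_modEq_add_one (S_modEq_add_one hc hbo) h

theorem stmt_4 (c b : ℕ) (hb : 2 ≤ b) (hc : Odd c) (hbo : Odd b) :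
    ∀ a k : ℕ, 0 < a → 0 < k → (S c b)^[k] a = a → Even k :=
  stmt_4_general c b hc hbo
end

section
/- Fix integers c ≥ 0 and b ≥ 2. Let T be a finite nonempty set of positive integers, and suppose the image set {S_{[c,b]}(t) : t ∈ T} is [c,b]-good. Then T is [c,b]-good. -/
/-- `u ∈ U_{[c,b]}`: `u` is a positive integer that is a periodic point of `S_{[c,b]}`. -/
def inU (c b u : ℕ) : Prop := 0 < u ∧ ∃ m, 0 < m ∧ (S c b)^[m] u = u

/-- A finite set `T` of positive integers is `[c,b]`-good if for each `u ∈ U_{[c,b]}`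
there exist `n, k ≥ 0` such that `S_{[c,b]}^k (t + n) = u` for all `t ∈ T`. -/
def Good (c b : ℕ) (T : Finset ℕ) : Prop :=
  ∀ u, inU c b u → ∃ n k : ℕ, ∀ t ∈ T, (S c b)^[k] (t + n) = u

/-! Adding `N = b ^ L * (1 1 … 1)_b` (with `n` ones), where `L` exceeds the number of digits of
every `t ∈ T`, just appends zeros and `n` ones to the digits of `t`, so it raises
`S_{[c,b]}(t)` by exactly `n` simultaneously for all `t ∈ T`. Hence if `S^k(S(t) + n) = u` for all
`t ∈ T`, then `S^(k+1)(t + N) = u` for all `t ∈ T`. -/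

open Nat List

theorem S_add_base_pow_mul {c b t L : ℕ} (hb : 1 < b) (hL : (digits b t).length ≤ L) (m : ℕ) :
    S c b (t + b ^ L * m) + c = S c b t + S c b m := by
  rcases Nat.eq_zero_or_pos m with rfl | hm
  · simp [S]
  have hdigits := digits_append_zeroes_append_digits (n := t) (k := L - (digits b t).length) hb hm
  rw [Nat.add_sub_cancel' hL] at hdigits
  simp only [S, ← hdigits, map_append, List.sum_append, map_replicate, sum_replicate]
  simp only [ne_eq, OfNat.ofNat_ne_zero, not_false_eq_true, zero_pow, smul_zero, add_zero]
  ring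

theorem S_ofDigits_replicate_one {c b : ℕ} (hb : 1 < b) (n : ℕ) :
    S c b (ofDigits b (replicate n 1)) = c + n := by
  have hdigits : digits b (ofDigits b (replicate n 1)) = replicate n 1 := by
    refine digits_ofDigits b hb _ (fun d hd => ?_) (fun hne => ?_)
    · rw [eq_of_mem_replicate hd]; exact hb
    · rw [getLast_replicate]; exact one_ne_zero
  simp [S, hdigits]

theorem exists_S_add_eq_S_add {c b : ℕ} (hb : 1 < b) (T : Finset ℕ) (n : ℕ) :
    ∃ N, ∀ t ∈ T, S c b (t + N) = S c b t + n := by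
  refine ⟨b ^ T.sup (fun t => (digits b t).length) * ofDigits b (replicate n 1), fun t ht => ?_⟩
  have hL : (digits b t).length ≤ T.sup (fun t => (digits b t).length) :=
    Finset.le_sup (f := fun t => (digits b t).length) ht
  have := S_add_base_pow_mul (c := c) hb hL (ofDigits b (replicate n 1))
  rw [S_ofDigits_replicate_one hb] at this
  omega

theorem stmt_6_general (c b : ℕ) (hb : 2 ≤ b) (T : Finset ℕ)
    (h : Good c b (T.image (S c b))) : Good c b T := by
  intro u hu
  obtain ⟨n, k, hk⟩ := h u hu
  obtain ⟨N, hN⟩ := exists_S_add_eq_S_add (c := c) hb T n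
  refine ⟨N, k + 1, fun t ht => ?_⟩
  rw [Function.iterate_succ_apply, hN t ht]
  exact hk _ (Finset.mem_image_of_mem _ ht)

theorem stmt_6 (c b : ℕ) (hb : 2 ≤ b) (T : Finset ℕ) (hpos : ∀ t ∈ T, 0 < t)
    (hne : T.Nonempty) (h : Good c b (T.image (S c b))) : Good c b T :=
  stmt_6_general c b hb T h
end

section
/- Fix integers c ≥ 0 and b ≥ 2. Let F : ℤ⁺ → ℤ⁺ be a composition of a finite (possibly empty) sequence of the functions S_{[c,b]} and I, where I(t) = t + 1. If T is a finite set of positive integers such that the image F(T) is [c,b]-good, then T is [c,b]-good. -/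
/-!
Call `f` shift-reachable if, for every finite `T` and every `n`, a common translate `T + N`
is carried onto `f(T) + n` pointwise by a common iterate of `S`. Such an `f` pulls goodness
back from `f(T)` to `T`, and shift-reachable maps are closed under composition. The map
`t ↦ t + 1` is trivially shift-reachable. For `S` itself take `N = b ^ D · (11…1)_b` with
`n` ones, where `D` bounds the number of digits of the elements of `T`: the digits of `t + N`
are those of `t`, some zeros and `n` ones, so `S (t + N) = S t + n`.
-/

open Nat in
theorem sum_sq_digits_add_base_pow_mul {b n k : ℕ} (hb : 1 < b) (hk : (digits b n).length ≤ k)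
    (m : ℕ) :
    ((digits b (n + b ^ k * m)).map (· ^ 2)).sum =
      ((digits b n).map (· ^ 2)).sum + ((digits b m).map (· ^ 2)).sum := by
  rcases Nat.eq_zero_or_pos m with rfl | hm
  · simp
  obtain ⟨j, rfl⟩ := Nat.exists_eq_add_of_le hk
  rw [← digits_append_zeroes_append_digits hb hm]
  simp

open Nat in
theorem digits_repunit {b : ℕ} (hb : 1 < b) (r : ℕ) :
    digits b (ofDigits b (List.replicate r 1)) = List.replicate r 1 := by
  refine digits_ofDigits b hb _ (fun l hl => ?_) (fun _ => ?_)
  · rw [List.eq_of_mem_replicate hl]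
    exact hb
  · simp

theorem S_add_base_pow_mul_repunit {c b n k : ℕ} (hb : 1 < b) (hk : (Nat.digits b n).length ≤ k)
    (r : ℕ) : S c b (n + b ^ k * Nat.ofDigits b (List.replicate r 1)) = S c b n + r := by
  simp [S, sum_sq_digits_add_base_pow_mul hb hk, digits_repunit hb, add_assoc]

def ShiftReachable (c b : ℕ) (f : ℕ → ℕ) : Prop :=
  ∀ (T : Finset ℕ) (n : ℕ), ∃ N k : ℕ, ∀ t ∈ T, (S c b)^[k] (t + N) = f t + n

namespace ShiftReachable

variable {c b : ℕ}

theorem id : ShiftReachable c b id :=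
  fun _ n => ⟨n, 0, fun _ _ => rfl⟩

theorem succ : ShiftReachable c b (· + 1) :=
  fun _ n => ⟨n + 1, 0, fun t _ => by simp only [Function.iterate_zero_apply]; omega⟩

theorem S (hb : 1 < b) : ShiftReachable c b (S c b) := by
  intro T n
  refine ⟨b ^ T.sup (fun t => (Nat.digits b t).length) * Nat.ofDigits b (List.replicate n 1), 1,
    fun t ht => ?_⟩
  exact S_add_base_pow_mul_repunit hb
    (Finset.le_sup (f := fun t => (Nat.digits b t).length) ht) n

theorem comp {f g : ℕ → ℕ} (hf : ShiftReachable c b f) (hg : ShiftReachable c b g) :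
    ShiftReachable c b (f ∘ g) := by
  intro T n
  obtain ⟨N₁, k₁, hN₁⟩ := hf (T.image g) n
  obtain ⟨N₂, k₂, hN₂⟩ := hg T N₁
  refine ⟨N₂, k₁ + k₂, fun t ht => ?_⟩
  rw [Function.iterate_add_apply, hN₂ t ht]
  exact hN₁ (g t) (Finset.mem_image_of_mem g ht)

theorem foldr_comp (hb : 1 < b) {L : List (ℕ → ℕ)}
    (hL : ∀ f ∈ L, f = _root_.S c b ∨ f = (· + 1)) :
    ShiftReachable c b (L.foldr (· ∘ ·) _root_.id) := by
  induction L with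
  | nil => exact id
  | cons f L ih =>
    have hf : ShiftReachable c b f := by
      rcases hL f List.mem_cons_self with rfl | rfl
      exacts [S hb, succ]
    exact hf.comp (ih fun g hg => hL g (List.mem_cons_of_mem f hg))

end ShiftReachable

theorem Good.of_image {c b : ℕ} {f : ℕ → ℕ} {T : Finset ℕ} (hf : ShiftReachable c b f)
    (h : Good c b (T.image f)) : Good c b T := by
  intro u hu
  obtain ⟨n, k, hk⟩ := h u hu
  obtain ⟨N, k', hN⟩ := hf T n
  refine ⟨N, k + k', fun t ht => ?_⟩
  rw [Function.iterate_add_apply, hN t ht]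
  exact hk (f t) (Finset.mem_image_of_mem f ht)

theorem stmt_7_general (c b : ℕ) (hb : 2 ≤ b) (F : ℕ → ℕ)
    (hF : ∃ L : List (ℕ → ℕ), (∀ f ∈ L, f = S c b ∨ f = (· + 1)) ∧
      F = L.foldr (· ∘ ·) id)
    (T : Finset ℕ)
    (h : Good c b (T.image F)) : Good c b T := by
  obtain ⟨L, hL, rfl⟩ := hF
  exact Good.of_image (ShiftReachable.foldr_comp hb hL) h

theorem stmt_7 (c b : ℕ) (hb : 2 ≤ b) (F : ℕ → ℕ)
    (hF : ∃ L : List (ℕ → ℕ), (∀ f ∈ L, f = S c b ∨ f = (· + 1)) ∧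
      F = L.foldr (· ∘ ·) id)
    (T : Finset ℕ) (hpos : ∀ t ∈ T, 0 < t)
    (h : Good c b (T.image F)) : Good c b T :=
  stmt_7_general c b hb F hF T h
end

section
/- Fix integers c ≥ 0 and b ≥ 2, let u ∈ U_{[c,b]}, and set d = gcd(2, b-1). Then there exist arbitrarily long finite d-consecutive sequences of u-attracted numbers for S_{[c,b]}: for every positive integer N there exists a positive integer n such that n, n + d, n + 2d, …, n + (N-1)d are all u-attracted. -/
/-!
Write `σ(n)` for the sum of the squares of the base-`b` digits of `n`, so `S(n) = c + σ(n)`.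
Since `σ` is additive over blocks of digits separated by zeros, prefixing a repunit to
`n + t₀` raises `S(n + t₀)` by any prescribed amount simultaneously for all `n` in a finite set;
hence a finite set that becomes `u`-attracted after shifting by `t₀`, applying `S` and shifting
again can be shifted directly into the `u`-attracted numbers.

Two numbers `x < y` congruent modulo `gcd(2, b-1)` can be merged by such a shift-`S`-shift-`S`
step: a first shift places them at `q·b^K + z` and `(q+1)·b^K`, with the digit `q` chosen so
that their digit-square sums agree modulo `b - 1`; a second shift places those values at
`m + s·b^L` and `b·m + s·b^L`, which have equal digit-square sums. As `σ(n) ≡ n` modulo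
`gcd(2, b-1)`, the merged set stays pairwise congruent, and induction on its size reduces
to a single number, which is shifted onto `u·b^K`; this is `u`-attracted because
`S(u·b^K) = S(u)`.
-/

namespace AugmentedHappy

open Finset

def digitSqSum (b n : ℕ) : ℕ := ((Nat.digits b n).map (· ^ 2)).sum

def Attracted (c b u a : ℕ) : Prop := ∃ k, (S c b)^[k] a = u

lemma S_eq_add_digitSqSum (c b a : ℕ) : S c b a = c + digitSqSum b a := rfl

@[simp] lemma digitSqSum_zero (b : ℕ) : digitSqSum b 0 = 0 := by simp [digitSqSum]

lemma digitSqSum_add_base_mul {b r : ℕ} (hb : 1 < b) (hr : r < b) (m : ℕ) :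
    digitSqSum b (r + b * m) = r ^ 2 + digitSqSum b m := by
  by_cases h : r ≠ 0 ∨ m ≠ 0
  · simp [digitSqSum, Nat.digits_add b hb r m hr h]
  · obtain ⟨rfl, rfl⟩ : r = 0 ∧ m = 0 := by tauto
    simp

lemma digitSqSum_eq_mod_add_div {b : ℕ} (hb : 1 < b) (n : ℕ) :
    digitSqSum b n = (n % b) ^ 2 + digitSqSum b (n / b) := by
  conv_lhs => rw [← Nat.mod_add_div n b]
  exact digitSqSum_add_base_mul hb (Nat.mod_lt n (by omega)) _

lemma digitSqSum_of_lt {b r : ℕ} (hb : 1 < b) (hr : r < b) : digitSqSum b r = r ^ 2 := by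
  simpa using digitSqSum_add_base_mul hb hr 0

lemma digitSqSum_base_mul {b : ℕ} (hb : 1 < b) (m : ℕ) :
    digitSqSum b (b * m) = digitSqSum b m := by
  simpa using digitSqSum_add_base_mul hb (by omega : 0 < b) m

lemma digitSqSum_add_base_pow_mul {b z K : ℕ} (hb : 1 < b) (hz : z < b ^ K) (x : ℕ) :
    digitSqSum b (z + b ^ K * x) = digitSqSum b z + digitSqSum b x := by
  induction K generalizing z with
  | zero =>
    obtain rfl : z = 0 := by simpa using hz
    simp
  | succ K ih =>
    have hzb : z / b < b ^ K := Nat.div_lt_of_lt_mul (by rwa [← pow_succ'])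
    calc digitSqSum b (z + b ^ (K + 1) * x)
        = digitSqSum b (z % b + b * (z / b + b ^ K * x)) := by
          rw [mul_add, ← add_assoc, Nat.mod_add_div, pow_succ', mul_assoc]
      _ = (z % b) ^ 2 + digitSqSum b (z / b) + digitSqSum b x := by
          rw [digitSqSum_add_base_mul hb (Nat.mod_lt z (by omega)), ih hzb, add_assoc]
      _ = digitSqSum b z + digitSqSum b x := by rw [← digitSqSum_eq_mod_add_div hb]

lemma digitSqSum_modEq {b e : ℕ} (hb : 1 < b) (he2 : e ∣ 2) (heb : e ∣ b - 1) (n : ℕ) :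
    digitSqSum b n ≡ n [MOD e] := by
  induction n using Nat.strong_induction_on with
  | _ n ih =>
  rcases Nat.eq_zero_or_pos n with rfl | hn
  · simp [Nat.ModEq]
  have hsq : (n % b) ^ 2 ≡ n % b [MOD e] := by
    refine Nat.ModEq.of_dvd he2 ?_
    rw [Nat.ModEq, Nat.pow_mod]
    rcases Nat.mod_two_eq_zero_or_one (n % b) with h | h <;> simp [h]
  have hb1 : 1 ≡ b [MOD e] := (Nat.modEq_iff_dvd' hb.le).2 heb
  calc digitSqSum b n = (n % b) ^ 2 + digitSqSum b (n / b) := digitSqSum_eq_mod_add_div hb n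
    _ ≡ n % b + 1 * (n / b) [MOD e] := hsq.add (by simpa using ih _ (Nat.div_lt_self hn hb))
    _ ≡ n % b + b * (n / b) [MOD e] := (hb1.mul_right _).add_left _
    _ = n := Nat.mod_add_div n b

lemma exists_digitSqSum_eq {b : ℕ} (hb : 1 < b) (m : ℕ) : ∃ n, digitSqSum b n = m := by
  induction m with
  | zero => exact ⟨0, digitSqSum_zero b⟩
  | succ m ih =>
    obtain ⟨n, hn⟩ := ih
    exact ⟨1 + b * n, by rw [digitSqSum_add_base_mul hb hb, hn, one_pow, add_comm]⟩

lemma exists_shift_S_eq_add (c : ℕ) {b : ℕ} (hb : 1 < b) (B t₀ t' : ℕ) :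
    ∃ t, ∀ w < B, S c b (w + t) = S c b (w + t₀) + t' := by
  obtain ⟨n, hn⟩ := exists_digitSqSum_eq hb t'
  refine ⟨t₀ + b ^ (B + t₀) * n, fun w hw => ?_⟩
  have hlt : w + t₀ < b ^ (B + t₀) := (by omega : w + t₀ < B + t₀).trans (Nat.lt_pow_self hb)
  rw [← add_assoc, S_eq_add_digitSqSum, S_eq_add_digitSqSum,
    digitSqSum_add_base_pow_mul hb hlt, hn, add_assoc]

lemma Attracted.of_S {c b u a : ℕ} (h : Attracted c b u (S c b a)) : Attracted c b u a :=
  let ⟨k, hk⟩ := h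
  ⟨k + 1, by rwa [Function.iterate_succ_apply]⟩

lemma exists_shift_attracted_of_S {c b u : ℕ} (hb : 1 < b) (F : Finset ℕ) (t₀ t' : ℕ)
    (h : ∀ w ∈ F, Attracted c b u (S c b (w + t₀) + t')) :
    ∃ t, ∀ w ∈ F, Attracted c b u (w + t) := by
  obtain ⟨B, hB⟩ := F.exists_nat_subset_range
  obtain ⟨t, ht⟩ := exists_shift_S_eq_add c hb B t₀ t'
  exact ⟨t, fun w hw => .of_S (ht w (mem_range.1 (hB hw)) ▸ h w hw)⟩

lemma exists_shift_digitSqSum_eq {b s M : ℕ} (hb : 1 < b) (h : s ≡ M [MOD b - 1]) :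
    ∃ t, digitSqSum b (s + t) = digitSqSum b (M + t) := by
  wlog hsM : s ≤ M generalizing s M with H
  · obtain ⟨t, ht⟩ := H h.symm (le_of_not_ge hsM)
    exact ⟨t, ht.symm⟩
  obtain ⟨m, hm⟩ := (Nat.modEq_iff_dvd' hsM).1 h
  have hbm : (b - 1) * m + m = b * m := by
    rw [← Nat.succ_mul, Nat.succ_eq_add_one, Nat.sub_add_cancel hb.le]
  have hmb : b * m < b ^ (b * m) := Nat.lt_pow_self hb
  have hm_lt : m < b ^ (b * m) := lt_of_le_of_lt (Nat.le_mul_of_pos_left m (by omega)) hmb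
  have hs : s ≤ b ^ (b * m) * s := Nat.le_mul_of_pos_left s (by positivity)
  -- `m` and `b * m` have the same digit-square sum and differ by `M - s`
  refine ⟨m + b ^ (b * m) * s - s, ?_⟩
  have es : s + (m + b ^ (b * m) * s - s) = m + b ^ (b * m) * s := by omega
  have eM : M + (m + b ^ (b * m) * s - s) = b * m + b ^ (b * m) * s := by omega
  rw [es, eM, digitSqSum_add_base_pow_mul hb hm_lt, digitSqSum_add_base_pow_mul hb hmb,
    digitSqSum_base_mul hb]

lemma exists_two_mul_add_one_modEq {m P : ℕ} (hm : 0 < m) (hP : P ≡ 1 [MOD Nat.gcd 2 m]) :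
    ∃ q < m, 2 * q + 1 ≡ P [MOD m] := by
  obtain ⟨r, hr_even, hr⟩ : ∃ r, Even r ∧ r ≡ P + m - 1 [MOD m] := by
    rcases Nat.even_or_odd (P + m - 1) with h | h
    · exact ⟨_, h, rfl⟩
    have hm_odd : Odd m := by
      by_contra hm_even
      rw [Nat.not_odd_iff_even] at hm_even
      rw [Nat.gcd_eq_left (even_iff_two_dvd.1 hm_even), Nat.ModEq] at hP
      rw [Nat.even_iff] at hm_even
      rw [Nat.odd_iff] at h
      omega
    exact ⟨P + m - 1 + m, h.add_odd hm_odd, Nat.add_modEq_right⟩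
  refine ⟨r / 2 % m, Nat.mod_lt _ hm, ?_⟩
  calc 2 * (r / 2 % m) + 1 ≡ 2 * (r / 2) + 1 [MOD m] :=
        ((Nat.mod_modEq _ _).mul_left 2).add_right 1
    _ = r + 1 := by rw [Nat.two_mul_div_two_of_even hr_even]
    _ ≡ P + m - 1 + 1 [MOD m] := hr.add_right 1
    _ = P + m := by omega
    _ ≡ P [MOD m] := Nat.add_modEq_right

lemma exists_shift_digitSqSum_modEq {b x y : ℕ} (hb : 1 < b)
    (h : x ≡ y [MOD Nat.gcd 2 (b - 1)]) :
    ∃ t, digitSqSum b (x + t) ≡ digitSqSum b (y + t) [MOD b - 1] := by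
  wlog hxy : x < y generalizing x y with H
  · rcases (not_lt.1 hxy).eq_or_lt with rfl | hyx
    · exact ⟨0, rfl⟩
    · obtain ⟨t, ht⟩ := H h.symm hyx
      exact ⟨t, ht.symm⟩
  have hy : y < b ^ y := Nat.lt_pow_self hb
  set z := b ^ y - (y - x)
  have hz : z < b ^ y := by omega
  have hzP : digitSqSum b z ≡ 1 [MOD Nat.gcd 2 (b - 1)] := by
    have hb1 : b ≡ 1 [MOD Nat.gcd 2 (b - 1)] :=
      ((Nat.modEq_iff_dvd' hb.le).2 (Nat.gcd_dvd_right 2 (b - 1))).symm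
    have hsum : z + (y - x) ≡ 1 + 0 [MOD Nat.gcd 2 (b - 1)] := by
      rw [show z + (y - x) = b ^ y by omega]
      simpa using hb1.pow y
    have hΔ : y - x ≡ 0 [MOD Nat.gcd 2 (b - 1)] :=
      Nat.modEq_zero_iff_dvd.2 ((Nat.modEq_iff_dvd' hxy.le).1 h)
    exact (digitSqSum_modEq hb (Nat.gcd_dvd_left _ _) (Nat.gcd_dvd_right _ _) z).trans
      (hΔ.add_right_cancel hsum)
  obtain ⟨q, hq, hqz⟩ := exists_two_mul_add_one_modEq (by omega : 0 < b - 1) hzP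
  refine ⟨z + b ^ y * q - x, ?_⟩
  have ex : x + (z + b ^ y * q - x) = z + b ^ y * q := by omega
  have ey : y + (z + b ^ y * q - x) = 0 + b ^ y * (q + 1) := by
    rw [mul_add_one]
    omega
  rw [ex, ey, digitSqSum_add_base_pow_mul hb hz, digitSqSum_add_base_pow_mul hb (by positivity),
    digitSqSum_zero, zero_add, digitSqSum_of_lt (r := q) hb (by omega),
    digitSqSum_of_lt (r := q + 1) hb (by omega)]
  calc digitSqSum b z + q ^ 2 ≡ 2 * q + 1 + q ^ 2 [MOD b - 1] := hqz.symm.add_right _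
    _ = (q + 1) ^ 2 := by ring

lemma exists_shifts_S_S_eq (c : ℕ) {b x y : ℕ} (hb : 1 < b)
    (h : x ≡ y [MOD Nat.gcd 2 (b - 1)]) :
    ∃ t₀ t₁, S c b (S c b (x + t₀) + t₁) = S c b (S c b (y + t₀) + t₁) := by
  obtain ⟨t₀, h₀⟩ := exists_shift_digitSqSum_modEq hb h
  obtain ⟨t₁, h₁⟩ := exists_shift_digitSqSum_eq hb (h₀.add_left c)
  exact ⟨t₀, t₁, congrArg (c + ·) h₁⟩

lemma S_modEq_S {c b a a' : ℕ} (hb : 1 < b) (h : a ≡ a' [MOD Nat.gcd 2 (b - 1)]) :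
    S c b a ≡ S c b a' [MOD Nat.gcd 2 (b - 1)] :=
  have H := digitSqSum_modEq hb (Nat.gcd_dvd_left 2 (b - 1)) (Nat.gcd_dvd_right 2 (b - 1))
  ((H a).trans (h.trans (H a').symm)).add_left c

lemma exists_shift_attracted {c b u : ℕ} (hb : 1 < b) (hu : inU c b u) (x : ℕ) :
    ∃ t, Attracted c b u (x + t) := by
  obtain ⟨hu0, m, hm, hmu⟩ := hu
  have hS : S c b (b ^ x * u) = S c b u := by
    have h := digitSqSum_add_base_pow_mul hb (by positivity : 0 < b ^ x) u
    rw [zero_add, digitSqSum_zero, zero_add] at h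
    rw [S_eq_add_digitSqSum, h, S_eq_add_digitSqSum]
  have hx : x ≤ b ^ x * u := (Nat.lt_pow_self hb).le.trans (Nat.le_mul_of_pos_right _ hu0)
  obtain ⟨m, rfl⟩ := Nat.exists_eq_succ_of_ne_zero hm.ne'
  refine ⟨b ^ x * u - x, m + 1, ?_⟩
  rw [Nat.add_sub_cancel' hx, Function.iterate_succ_apply, hS, ← Function.iterate_succ_apply, hmu]

theorem exists_shift_forall_attracted {c b u : ℕ} (hb : 1 < b) (hu : inU c b u) (F : Finset ℕ)
    (hF : ∀ x ∈ F, ∀ y ∈ F, x ≡ y [MOD Nat.gcd 2 (b - 1)]) :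
    ∃ t, ∀ w ∈ F, Attracted c b u (w + t) := by
  induction hn : #F using Nat.strong_induction_on generalizing F with
  | _ n ih =>
  rcases le_or_gt #F 1 with h1 | h1
  · rcases F.eq_empty_or_nonempty with rfl | ⟨x, hx⟩
    · exact ⟨0, by simp⟩
    obtain ⟨t, ht⟩ := exists_shift_attracted hb hu x
    exact ⟨t, fun w hw => card_le_one.1 h1 w hw x hx ▸ ht⟩
  obtain ⟨x, hx, y, hy, hxy⟩ := one_lt_card.1 h1
  obtain ⟨t₀, t₁, hg⟩ := exists_shifts_S_S_eq c hb (hF x hx y hy)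
  set g := fun w => S c b (S c b (w + t₀) + t₁)
  have hcard : #(F.image g) < n :=
    hn ▸ card_image_le.lt_of_ne fun h => hxy (card_image_iff.1 h hx hy hg)
  have hcong : ∀ v ∈ F.image g, ∀ v' ∈ F.image g, v ≡ v' [MOD Nat.gcd 2 (b - 1)] := by
    simp only [forall_mem_image]
    exact fun w hw w' hw' =>
      S_modEq_S hb ((S_modEq_S hb ((hF w hw w' hw').add_right t₀)).add_right t₁)
  obtain ⟨t₂, ht₂⟩ := ih _ hcard (F.image g) hcong rfl
  obtain ⟨t₁', ht₁'⟩ := exists_shift_attracted_of_S hb (F.image fun w => S c b (w + t₀)) t₁ t₂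
    (forall_mem_image.2 fun w hw => ht₂ (g w) (mem_image_of_mem g hw))
  exact exists_shift_attracted_of_S hb F t₀ t₁' fun w hw => ht₁' _ (mem_image_of_mem _ hw)

end AugmentedHappy

theorem stmt_11 (c b : ℕ) (hb : 2 ≤ b) (u : ℕ) (hu : inU c b u)
    (d : ℕ) (hd : d = Nat.gcd 2 (b - 1)) :
    ∀ N : ℕ, 0 < N → ∃ n : ℕ, 0 < n ∧
      ∀ i : ℕ, i < N → ∃ k : ℕ, (S c b)^[k] (n + i * d) = u := by
  intro N _
  set F := (Finset.range N).image (1 + · * d)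
  have hF : ∀ x ∈ F, ∀ y ∈ F, x ≡ y [MOD Nat.gcd 2 (b - 1)] := by
    simp only [F, Finset.forall_mem_image, ← hd]
    exact fun i _ j _ => ((Nat.modEq_zero_iff_dvd.2 (dvd_mul_left d i)).trans
      (Nat.modEq_zero_iff_dvd.2 (dvd_mul_left d j)).symm).add_left 1
  obtain ⟨t, ht⟩ := AugmentedHappy.exists_shift_forall_attracted hb hu F hF
  refine ⟨1 + t, by omega, fun i hi => ?_⟩
  obtain ⟨k, hk⟩ := ht _ (Finset.mem_image_of_mem _ (Finset.mem_range.2 hi))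
  exact ⟨k, by rwa [add_right_comm]⟩
end

section
/- Fix integers c ≥ 0 and b ≥ 2 with b even, and let u ∈ U_{[c,b]}. Then there exist arbitrarily long finite sequences of consecutive u-attracted numbers for S_{[c,b]}: for every positive integer N there exists a positive integer n such that n, n + 1, …, n + N - 1 are all u-attracted. -/
/-!
Write `T = digitSqSum b`, so `S c b = c + T`. Since `T (x * b ^ P + y) = T x + T y` for
`y < b ^ P` and every `t` is `T R` for a repunit `R`, prefixing a block `R` with `T R = n' - c`
lifts a translate: if all `n' + T (e + q)`, `q ∈ Q`, are `u`-attracted, then so are all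
`n + q` with `n = R * b ^ P + e`, as `S (n + q) = n' + T (e + q)`.

This gives, by induction on `#Q`, a `u`-attracted translate `n + Q` of every finite `Q`; take
`Q = range N`. Singletons come from `u * b ^ P`, which `S` sends to `S u`. For `q < q'` in `Q`
we find `e₁, e₂` with `T (e₂ + T (e₁ + q)) = T (e₂ + T (e₁ + q')) = 1`, so that
`v ↦ T (e₂ + T (e₁ + v))` merges `q` and `q'` and two block prefixes lift the translate back.
The leading digit `d` of `e₁ + q` is chosen with `T (e₁ + q) ≡ 2d + 1 (mod b - 1)`, possible
because `b - 1` is odd, and its number of digits `b - 1` then from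
`b ^ n ≡ 1 + n (b - 1) (mod (b - 1)²)`.
-/

def digitSqSum (b n : ℕ) : ℕ := ((Nat.digits b n).map (· ^ 2)).sum

lemma S_eq_add_digitSqSum (c b a : ℕ) : S c b a = c + digitSqSum b a := rfl

section digitSqSum

variable {b : ℕ}

@[simp] lemma digitSqSum_zero : digitSqSum b 0 = 0 := by simp [digitSqSum]

lemma digitSqSum_of_lt {d : ℕ} (hd : d < b) : digitSqSum b d = d ^ 2 := by
  rcases d.eq_zero_or_pos with rfl | hd0
  · simp
  · simp [digitSqSum, Nat.digits_of_lt b d hd0.ne' hd]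

lemma digitSqSum_mul_pow_add (hb : 1 < b) (x : ℕ) {L y : ℕ} (hy : y < b ^ L) :
    digitSqSum b (x * b ^ L + y) = digitSqSum b x + digitSqSum b y := by
  rcases x.eq_zero_or_pos with rfl | hx
  · simp
  have hlen := (Nat.digits_length_le_iff hb y).mpr hy
  rw [digitSqSum, add_comm, mul_comm, ← Nat.add_sub_of_le hlen,
    ← Nat.digits_append_zeroes_append_digits hb hx]
  simp [digitSqSum, add_comm]

lemma digitSqSum_mul_pow (hb : 1 < b) (x L : ℕ) : digitSqSum b (x * b ^ L) = digitSqSum b x := by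
  simpa using digitSqSum_mul_pow_add hb x (pow_pos (zero_lt_one.trans hb) L)

lemma digitSqSum_pow (hb : 1 < b) (L : ℕ) : digitSqSum b (b ^ L) = 1 := by
  simpa [digitSqSum_of_lt hb] using digitSqSum_mul_pow hb 1 L

lemma digitSqSum_pow_sub_one (hb : 1 < b) (L : ℕ) :
    digitSqSum b (b ^ L - 1) = L * (b - 1) ^ 2 := by
  induction L with
  | zero => simp
  | succ L ih =>
    have hpos : 0 < b ^ L := pow_pos (zero_lt_one.trans hb) L
    have hsplit : b ^ (L + 1) - 1 = (b - 1) * b ^ L + (b ^ L - 1) := by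
      have : b ^ L ≤ b * b ^ L := Nat.le_mul_of_pos_left _ (by omega)
      rw [pow_succ', Nat.sub_mul, one_mul]; omega
    rw [hsplit, digitSqSum_mul_pow_add hb _ (by omega), digitSqSum_of_lt (by omega), ih]
    ring

lemma exists_digitSqSum_eq (hb : 1 < b) (t : ℕ) : ∃ R, digitSqSum b R = t := by
  refine ⟨Nat.ofDigits b (List.replicate t 1), ?_⟩
  rw [digitSqSum, Nat.digits_ofDigits b hb _ (by simp [hb]) (by simp)]
  simp

end digitSqSum

lemma exists_add_one_pow_eq (B n : ℕ) : ∃ s, (B + 1) ^ n = 1 + B * n + B ^ 2 * s := by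
  induction n with
  | zero => exact ⟨0, by simp⟩
  | succ n ih =>
    obtain ⟨s, hs⟩ := ih
    exact ⟨s + n + B * s, by rw [pow_succ, hs]; ring⟩

lemma exists_mul_sq_add_mul_add_sq_eq_pow {b : ℕ} (hb : 0 < b) (v : ℕ) :
    ∃ k n, k * (b - 1) ^ 2 + (b - 1) * v + b ^ 2 = b ^ n := by
  obtain ⟨B, rfl⟩ : ∃ B, b = B + 1 := ⟨b - 1, by omega⟩
  obtain ⟨s, hs⟩ := exists_add_one_pow_eq B ((v + 1) * B + v)
  refine ⟨(v + 1) + (B + 2) * ((v + 1) * B + v) + (B + 1) ^ 2 * s, (v + 1) * B + v + 2, ?_⟩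
  rw [Nat.add_sub_cancel, pow_add, hs]
  ring

lemma exists_eq_two_mul_add_one_add_mul_of_even {b W : ℕ} (hb : 2 ≤ b) (hbe : Even b)
    (hW : 2 * b ≤ W) : ∃ d v, d + 1 < b ∧ W = 2 * d + 1 + (b - 1) * v := by
  obtain ⟨B, rfl⟩ : ∃ B, b = B + 1 := ⟨b - 1, by omega⟩
  obtain ⟨t, ht⟩ := hbe
  rw [Nat.add_sub_cancel]
  set d := t * (W - 1) % B
  have hdB : d < B := Nat.mod_lt _ (by omega)
  -- `2` is invertible modulo the odd number `B`, with inverse `t`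
  have hmod : 2 * d ≡ W - 1 [MOD B] := calc
    2 * d ≡ 2 * (t * (W - 1)) [MOD B] := (Nat.mod_modEq _ _).mul_left 2
    _ = W - 1 + B * (W - 1) := by rw [← mul_assoc, two_mul, ← ht]; ring
    _ ≡ W - 1 [MOD B] := Nat.add_mul_mod_self_left _ _ _
  obtain ⟨v, hv⟩ := (Nat.modEq_iff_dvd' (by omega)).mp hmod
  exact ⟨d, v, by omega, by omega⟩

lemma exists_digitSqSum_add_digitSqSum_eq_one {b q q' : ℕ} (hb : 2 ≤ b) (hbe : Even b)
    (hq : q < q') : ∃ e₁ e₂, digitSqSum b (e₂ + digitSqSum b (e₁ + q)) = 1 ∧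
      digitSqSum b (e₂ + digitSqSum b (e₁ + q')) = 1 := by
  set Δ := q' - q
  have hΔ : Δ < b ^ Δ := Nat.lt_pow_self hb
  set r := digitSqSum b (b ^ Δ - Δ)
  set j := 2 * b + q
  have hW : 2 * b ≤ j * (b - 1) ^ 2 + r :=
    le_add_right ((Nat.le_add_right _ _).trans (Nat.le_mul_of_pos_right _ (by
      have : 0 < b - 1 := by omega
      positivity)))
  obtain ⟨d, v, hd, hWdv⟩ := exists_eq_two_mul_add_one_add_mul_of_even hb hbe hW
  obtain ⟨k, n, hkn⟩ := exists_mul_sq_add_mul_add_sq_eq_pow (by omega : 0 < b) v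
  set m := k + j
  have hm : m < b ^ m := Nat.lt_pow_self hb
  -- in base `b`, `x` reads `d (b-1)…(b-1) (digits of b^Δ - Δ)`, so adding `Δ` carries through
  set x := (d * b ^ m + (b ^ m - 1)) * b ^ Δ + (b ^ Δ - Δ)
  have hx : digitSqSum b x = d ^ 2 + m * (b - 1) ^ 2 + r := by
    rw [digitSqSum_mul_pow_add hb _ (by omega), digitSqSum_mul_pow_add hb _ (by omega),
      digitSqSum_of_lt (by omega), digitSqSum_pow_sub_one hb]
  have hxΔ : x + Δ = (d + 1) * b ^ (m + Δ) := by
    obtain ⟨P, hP⟩ : ∃ P, b ^ m = P + 1 := ⟨b ^ m - 1, by omega⟩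
    obtain ⟨Y, hY⟩ : ∃ Y, b ^ Δ = Y + Δ := ⟨b ^ Δ - Δ, by omega⟩
    simp only [x, pow_add, hP, hY, Nat.add_sub_cancel]
    ring
  have hqx : q ≤ x :=
    calc q ≤ m := by omega
      _ ≤ b ^ m - 1 := by omega
      _ ≤ (d * b ^ m + (b ^ m - 1)) * b ^ Δ :=
        (Nat.le_add_left _ _).trans (Nat.le_mul_of_pos_right _ (by positivity))
      _ ≤ x := Nat.le_add_right _ _
  have hsum : b ^ 2 - (d + 1) ^ 2 + digitSqSum b x = b ^ n := by
    have hd2 : (d + 1) ^ 2 ≤ b ^ 2 := Nat.pow_le_pow_left (by omega) 2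
    have : digitSqSum b x + b ^ 2 = (d + 1) ^ 2 + b ^ n := by
      rw [hx, ← hkn]
      linear_combination hWdv
    omega
  refine ⟨x - q, b ^ 2 - (d + 1) ^ 2, ?_, ?_⟩
  · rw [Nat.sub_add_cancel hqx, hsum, digitSqSum_pow hb]
  · rw [show x - q + q' = x + Δ by omega, hxΔ, digitSqSum_mul_pow hb, digitSqSum_of_lt hd,
      Nat.sub_add_cancel (Nat.pow_le_pow_left (by omega) 2), digitSqSum_pow hb]

def IsAttracted (c b u a : ℕ) : Prop := ∃ k, (S c b)^[k] a = u

lemma IsAttracted.of_S {c b u a : ℕ} (h : IsAttracted c b u (S c b a)) :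
    IsAttracted c b u a :=
  let ⟨k, hk⟩ := h
  ⟨k + 1, by rwa [Function.iterate_succ_apply]⟩

lemma inU.isAttracted_S {c b u : ℕ} (hu : inU c b u) : IsAttracted c b u (S c b u) := by
  obtain ⟨-, m, hm, hmu⟩ := hu
  refine ⟨m - 1, ?_⟩
  rwa [← Function.iterate_succ_apply, Nat.succ_eq_add_one, Nat.sub_add_cancel hm]

def HasAttractedTranslate (c b u : ℕ) (Q : Finset ℕ) : Prop :=
  ∃ n, c < n ∧ ∀ q ∈ Q, IsAttracted c b u (n + q)

namespace HasAttractedTranslate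

variable {c b u : ℕ} {Q : Finset ℕ}

lemma mono {Q' : Finset ℕ} (h : HasAttractedTranslate c b u Q') (hQ : Q ⊆ Q') :
    HasAttractedTranslate c b u Q :=
  let ⟨n, hcn, hn⟩ := h
  ⟨n, hcn, fun q hq => hn q (hQ hq)⟩

lemma singleton (hb : 1 < b) (hu : inU c b u) (a : ℕ) : HasAttractedTranslate c b u {a} := by
  set P := a + c + 1
  have hP : P < b ^ P := Nat.lt_pow_self hb
  have hg : b ^ P ≤ u * b ^ P := Nat.le_mul_of_pos_left _ hu.1
  refine ⟨u * b ^ P - a, by omega, fun q hq => ?_⟩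
  rw [Finset.mem_singleton.mp hq, Nat.sub_add_cancel (by omega)]
  apply IsAttracted.of_S
  rw [S_eq_add_digitSqSum, digitSqSum_mul_pow hb]
  exact hu.isAttracted_S

lemma of_image (hb : 1 < b) (e : ℕ)
    (h : HasAttractedTranslate c b u (Q.image fun q => digitSqSum b (e + q))) :
    HasAttractedTranslate c b u Q := by
  obtain ⟨n', hcn', hn'⟩ := h
  obtain ⟨R, hR⟩ := exists_digitSqSum_eq hb (n' - c)
  have hR0 : 0 < R := Nat.pos_of_ne_zero fun h0 => by simp [h0] at hR; omega
  set P := e + Q.sup id + c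
  have hP : P < b ^ P := Nat.lt_pow_self hb
  have hRP : b ^ P ≤ R * b ^ P := Nat.le_mul_of_pos_left _ hR0
  refine ⟨R * b ^ P + e, by omega, fun q hq => ?_⟩
  have hqP : e + q < b ^ P := by
    have := Finset.le_sup (f := id) hq
    simp only [id] at this
    omega
  apply IsAttracted.of_S
  rw [S_eq_add_digitSqSum, add_assoc, digitSqSum_mul_pow_add hb _ hqP, hR, ← add_assoc,
    Nat.add_sub_cancel' hcn'.le]
  exact hn' _ (Finset.mem_image_of_mem _ hq)

end HasAttractedTranslate

theorem hasAttractedTranslate {c b u : ℕ} (hb : 2 ≤ b) (hbe : Even b) (hu : inU c b u)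
    (Q : Finset ℕ) : HasAttractedTranslate c b u Q := by
  induction hQ : Q.card using Nat.strong_induction_on generalizing Q with
  | _ r ih =>
  rcases le_or_gt Q.card 1 with hQ1 | hQ1
  · obtain ⟨a, ha⟩ := Finset.card_le_one_iff_subset_singleton.mp hQ1
    exact (HasAttractedTranslate.singleton hb hu a).mono ha
  obtain ⟨a, ha, a', ha', hne⟩ := Finset.one_lt_card.mp hQ1
  obtain ⟨e₁, e₂, hfa, hfa'⟩ : ∃ e₁ e₂, digitSqSum b (e₂ + digitSqSum b (e₁ + a)) = 1 ∧
      digitSqSum b (e₂ + digitSqSum b (e₁ + a')) = 1 := by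
    rcases hne.lt_or_gt with h | h
    · exact exists_digitSqSum_add_digitSqSum_eq_one hb hbe h
    · obtain ⟨e₁, e₂, h₁, h₂⟩ := exists_digitSqSum_add_digitSqSum_eq_one hb hbe h
      exact ⟨e₁, e₂, h₂, h₁⟩
  have hlt : ((Q.image fun q => digitSqSum b (e₁ + q)).image
      fun p => digitSqSum b (e₂ + p)).card < r := by
    rw [Finset.image_image, ← hQ]
    refine (Finset.card_image_le).lt_of_ne fun hcard => hne ?_
    exact Finset.card_image_iff.mp hcard ha ha' (hfa.trans hfa'.symm)
  exact ((ih _ hlt _ rfl).of_image hb e₂).of_image hb e₁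

theorem stmt_12 (c b : ℕ) (hb : 2 ≤ b) (hbe : Even b) (u : ℕ) (hu : inU c b u) :
    ∀ N : ℕ, 0 < N → ∃ n : ℕ, 0 < n ∧
      ∀ i : ℕ, i < N → ∃ k : ℕ, (S c b)^[k] (n + i) = u := by
  intro N _
  obtain ⟨n, hcn, hn⟩ := hasAttractedTranslate hb hbe hu (Finset.range N)
  exact ⟨n, by omega, fun i hi => hn i (Finset.mem_range.mpr hi)⟩
end

section
/- Fix integers c ≥ 0 and b ≥ 2, let u be any positive integer in the image of S_{[c,b]} (i.e., u = S_{[c,b]}(v) for some positive integer v), and set d = gcd(2, b-1). Then for every positive integer N there exists a positive integer n such that for each i with 0 ≤ i ≤ N-1 there is an integer k ≥ 0 with S_{[c,b]}^k(n + i·d) = u. -/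
def sqDigitSum (b n : ℕ) : ℕ := ((Nat.digits b n).map (· ^ 2)).sum

theorem S_eq_add_sqDigitSum (c b a : ℕ) : S c b a = c + sqDigitSum b a := rfl

theorem base_modEq_one {b : ℕ} (hb : 1 ≤ b) : b ≡ 1 [MOD Nat.gcd 2 (b - 1)] :=
  ((Nat.modEq_iff_dvd' hb).mpr (Nat.gcd_dvd_right 2 (b - 1))).symm

theorem exists_two_mul_add_one_modEq {b C : ℕ} (hb : 2 ≤ b)
    (hC : C ≡ 1 [MOD Nat.gcd 2 (b - 1)]) : ∃ a, a + 1 < b ∧ 2 * a + 1 ≡ C [MOD b - 1] := by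
  obtain ⟨t, rfl | rfl⟩ := Nat.even_or_odd' b
  · obtain ⟨t, rfl⟩ : ∃ t', t = t' + 1 := ⟨t - 1, by omega⟩
    rw [show 2 * (t + 1) - 1 = 2 * t + 1 by omega]
    have hlt := Nat.mod_lt ((C + 2 * t) * (t + 1)) (by omega : 2 * t + 1 > 0)
    -- `t + 1` inverts `2` modulo `2 * t + 1`, and `C + 2 * t ≡ C - 1`
    refine ⟨(C + 2 * t) * (t + 1) % (2 * t + 1), by omega, ?_⟩
    calc 2 * ((C + 2 * t) * (t + 1) % (2 * t + 1)) + 1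
        ≡ 2 * ((C + 2 * t) * (t + 1)) + 1 [MOD 2 * t + 1] :=
          ((Nat.mod_modEq _ _).mul_left 2).add_right 1
      _ = C + (2 * t + 1) * (C + 2 * t + 1) := by ring
      _ ≡ C [MOD 2 * t + 1] := Nat.add_mul_mod_self_left _ _ _
  · have ht : 0 < t := by omega
    rw [show 2 * t + 1 - 1 = 2 * t by omega] at hC ⊢
    have hC2 : C % 2 = 1 := by simpa [Nat.ModEq] using hC
    have hlt := Nat.mod_lt (C / 2) ht
    refine ⟨C / 2 % t, by omega, ?_⟩
    calc 2 * (C / 2 % t) + 1 ≡ 2 * (C / 2) + 1 [MOD 2 * t] :=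
          ((Nat.mod_modEq _ _).mul_left' 2).add_right 1
      _ = C := by omega

namespace sqDigitSum

variable {b : ℕ}

@[simp] theorem zero : sqDigitSum b 0 = 0 := by simp [sqDigitSum]

theorem of_lt {a : ℕ} (ha : a < b) : sqDigitSum b a = a ^ 2 := by
  rcases Nat.eq_zero_or_pos a with rfl | ha0
  · simp
  · simp [sqDigitSum, Nat.digits_of_lt b a ha0.ne' ha]

theorem add_base_pow_mul (hb : 1 < b) {w P : ℕ} (hw : w < b ^ P) (z : ℕ) :
    sqDigitSum b (w + b ^ P * z) = sqDigitSum b w + sqDigitSum b z := by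
  rcases Nat.eq_zero_or_pos z with rfl | hz
  · simp
  have hlen := (Nat.digits_length_le_iff hb w).mpr hw
  have hdigits := Nat.digits_append_zeroes_append_digits (k := P - (b.digits w).length) (n := w) hb hz
  rw [Nat.add_sub_cancel' hlen] at hdigits
  simp [sqDigitSum, ← hdigits]

theorem base_mul (hb : 1 < b) (m : ℕ) : sqDigitSum b (b * m) = sqDigitSum b m := by
  simpa using add_base_pow_mul hb (w := 0) (P := 1) (by simpa using hb.pos) m

theorem exists_pos_eq (hb : 1 < b) {A : ℕ} (hA : 0 < A) : ∃ x, 0 < x ∧ sqDigitSum b x = A := by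
  have hdigits : b.digits (Nat.ofDigits b (List.replicate A 1)) = List.replicate A 1 :=
    Nat.digits_ofDigits b hb _ (by simp [List.mem_replicate]; omega) (by simp)
  refine ⟨Nat.ofDigits b (List.replicate A 1), Nat.pos_of_ne_zero fun h => ?_, ?_⟩
  · rw [h, Nat.digits_zero] at hdigits
    simp at hdigits
    omega
  · simp [sqDigitSum, hdigits]

theorem modEq (hb : 1 ≤ b) (n : ℕ) : sqDigitSum b n ≡ n [MOD Nat.gcd 2 (b - 1)] := by
  have hsq : ((b.digits n).map (· ^ 2)).sum ≡ (b.digits n).sum [MOD 2] := by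
    simpa using Nat.ModEq.listSum_map (g := id) fun x _ => by
      rcases Nat.mod_two_eq_zero_or_one x with h | h <;> simp [Nat.ModEq, Nat.pow_mod, h]
  calc sqDigitSum b n ≡ (b.digits n).sum [MOD Nat.gcd 2 (b - 1)] :=
        hsq.of_dvd (Nat.gcd_dvd_left 2 (b - 1))
    _ = Nat.ofDigits 1 (b.digits n) := (Nat.ofDigits_one _).symm
    _ ≡ Nat.ofDigits b (b.digits n) [MOD Nat.gcd 2 (b - 1)] :=
        Nat.ofDigits_modEq' _ _ _ (base_modEq_one hb).symm _
    _ = n := Nat.ofDigits_digits b n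

theorem exists_add_modEq_of_modEq {x y : ℕ} (hb : 2 ≤ b) (h : x ≡ y [MOD Nat.gcd 2 (b - 1)]) :
    ∃ s, sqDigitSum b (x + s) ≡ sqDigitSum b (y + s) [MOD b - 1] := by
  wlog hxy : x < y generalizing x y
  · rcases (not_lt.mp hxy).eq_or_lt with rfl | hyx
    · exact ⟨0, rfl⟩
    · obtain ⟨s, hs⟩ := this h.symm hyx
      exact ⟨s, hs.symm⟩
  have hyB : y < b ^ y := Nat.lt_pow_self (by omega)
  -- With `B = b ^ y` and `δ = y - x`, take `x + s = a * B + (B - δ)` and `y + s = (a + 1) * B`: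
  -- their square digit sums differ by `2 * a + 1 - D (B - δ)`.
  have hC : sqDigitSum b (b ^ y - (y - x)) ≡ 1 [MOD Nat.gcd 2 (b - 1)] := by
    have hδ : y - x ≡ 0 [MOD Nat.gcd 2 (b - 1)] :=
      Nat.modEq_zero_iff_dvd.mpr ((Nat.modEq_iff_dvd' hxy.le).mp h)
    have hpow := (base_modEq_one (b := b) (by omega)).pow y
    rw [one_pow] at hpow
    have hB : b ^ y - (y - x) + (y - x) ≡ 1 + (y - x) [MOD Nat.gcd 2 (b - 1)] := by
      rw [Nat.sub_add_cancel (by omega)]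
      exact hpow.trans (hδ.add_left 1).symm
    exact (modEq (by omega) _).trans (Nat.ModEq.add_right_cancel' _ hB)
  obtain ⟨a, hab, ha⟩ := exists_two_mul_add_one_modEq hb hC
  refine ⟨b ^ y - (y - x) + b ^ y * a - x, ?_⟩
  have hx : x + (b ^ y - (y - x) + b ^ y * a - x) = b ^ y - (y - x) + b ^ y * a := by omega
  have hy : y + (b ^ y - (y - x) + b ^ y * a - x) = 0 + b ^ y * (a + 1) := by
    rw [Nat.mul_add_one]
    omega
  rw [hx, hy, add_base_pow_mul (by omega) (by omega : b ^ y - (y - x) < b ^ y),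
    add_base_pow_mul (by omega) (by positivity : 0 < b ^ y), of_lt (a := a) (by omega), of_lt hab,
    zero, zero_add]
  calc sqDigitSum b (b ^ y - (y - x)) + a ^ 2 ≡ 2 * a + 1 + a ^ 2 [MOD b - 1] :=
        ha.symm.add_right _
    _ = (a + 1) ^ 2 := by ring

theorem exists_add_eq_of_modEq {x y : ℕ} (hb : 2 ≤ b) (h : x ≡ y [MOD b - 1]) :
    ∃ s, sqDigitSum b (x + s) = sqDigitSum b (y + s) := by
  wlog hxy : x ≤ y generalizing x y
  · obtain ⟨s, hs⟩ := this h.symm (by omega)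
    exact ⟨s, hs.symm⟩
  obtain ⟨m, hm⟩ := (Nat.modEq_iff_dvd' hxy).mp h
  have hP : b * m + x < b ^ (b * m + x) := Nat.lt_pow_self (by omega)
  have hbm : m ≤ b * m := Nat.le_mul_of_pos_left m (by omega)
  refine ⟨b ^ (b * m + x) + m - x, ?_⟩
  have hx : x + (b ^ (b * m + x) + m - x) = m + b ^ (b * m + x) * 1 := by omega
  have hy : y + (b ^ (b * m + x) + m - x) = b * m + b ^ (b * m + x) * 1 := by
    have : (b - 1) * m + m = b * m := by
      rw [← Nat.succ_mul, Nat.succ_eq_add_one, Nat.sub_add_cancel (by omega)]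
    omega
  rw [hx, hy, add_base_pow_mul (by omega) (by omega), add_base_pow_mul (by omega) (by omega),
    base_mul (by omega)]

theorem exists_merge {x y : ℕ} (hb : 2 ≤ b) (h : x ≡ y [MOD Nat.gcd 2 (b - 1)]) :
    ∃ s s', sqDigitSum b (sqDigitSum b (x + s) + s') =
      sqDigitSum b (sqDigitSum b (y + s) + s') := by
  obtain ⟨s, hs⟩ := exists_add_modEq_of_modEq hb h
  exact ⟨s, exists_add_eq_of_modEq hb hs⟩

end sqDigitSum

open sqDigitSum

theorem exists_iterate_eq_of_S {c b u x : ℕ} (h : ∃ k, (S c b)^[k] (S c b x) = u) :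
    ∃ k, (S c b)^[k] x = u :=
  let ⟨k, hk⟩ := h
  ⟨k + 1, by rwa [Function.iterate_succ_apply]⟩

def Synchronizable (c b u : ℕ) (E : Finset ℕ) : Prop :=
  ∀ M, ∃ n ≥ M, ∀ e ∈ E, ∃ k, (S c b)^[k] (n + e) = u

namespace Synchronizable

variable {c b u : ℕ} {E F : Finset ℕ}

theorem mono (hEF : E ⊆ F) (hF : Synchronizable c b u F) : Synchronizable c b u E := fun M =>
  let ⟨n, hn, hF⟩ := hF M
  ⟨n, hn, fun e he => hF e (hEF he)⟩

theorem singleton (hb : 1 < b) {v : ℕ} (hv : 0 < v) (f : ℕ) :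
    Synchronizable c b (S c b v) {f} := by
  intro M
  have hP : M + f < b ^ (M + f) := Nat.lt_pow_self hb
  have hv' : b ^ (M + f) ≤ b ^ (M + f) * v := Nat.le_mul_of_pos_right _ hv
  refine ⟨b ^ (M + f) * v - f, by omega, fun e he => ⟨1, ?_⟩⟩
  rw [Finset.mem_singleton.mp he, Nat.sub_add_cancel (by omega), Function.iterate_one,
    S_eq_add_sqDigitSum, S_eq_add_sqDigitSum, ← zero_add (b ^ (M + f) * v),
    add_base_pow_mul hb (by positivity), zero, zero_add]

/-- With `sqDigitSum b x = n' - c`, one step of `S c b` sends `(s + b ^ P * x) + e` to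
`n' + sqDigitSum b (e + s)`. -/
theorem of_image_sqDigitSum_add (hb : 1 < b) (s : ℕ)
    (h : Synchronizable c b u (E.image fun e => sqDigitSum b (e + s))) :
    Synchronizable c b u E := by
  intro M
  obtain ⟨n', hn', hE⟩ := h (c + 1)
  obtain ⟨x, hx, hxA⟩ := exists_pos_eq hb (A := n' - c) (by omega)
  obtain ⟨K, hK⟩ := E.bddAbove
  have hP : M + s + K < b ^ (M + s + K) := Nat.lt_pow_self hb
  have hx' : b ^ (M + s + K) ≤ b ^ (M + s + K) * x := Nat.le_mul_of_pos_right _ hx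
  refine ⟨s + b ^ (M + s + K) * x, by omega, fun e he => exists_iterate_eq_of_S ?_⟩
  have heK : e ≤ K := hK he
  rw [S_eq_add_sqDigitSum, add_right_comm, add_comm s e, add_base_pow_mul hb (by omega), hxA,
    show c + (sqDigitSum b (e + s) + (n' - c)) = n' + sqDigitSum b (e + s) by omega]
  exact hE _ (Finset.mem_image_of_mem _ he)

end Synchronizable

theorem synchronizable_of_modEq {c b v : ℕ} (hb : 2 ≤ b) (hv : 0 < v) (E : Finset ℕ)
    (hE : ∀ x ∈ E, ∀ y ∈ E, x ≡ y [MOD Nat.gcd 2 (b - 1)]) :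
    Synchronizable c b (S c b v) E := by
  rcases le_or_gt E.card 1 with hcard | hcard
  · obtain ⟨f, hf⟩ := Finset.card_le_one_iff_subset_singleton.mp hcard
    exact (Synchronizable.singleton (by omega) hv f).mono hf
  obtain ⟨x, hx, y, hy, hxy⟩ := Finset.one_lt_card.mp hcard
  obtain ⟨s, s', hmerge⟩ := exists_merge hb (hE x hx y hy)
  set φ := fun e => sqDigitSum b (sqDigitSum b (e + s) + s')
  have hlt : (E.image φ).card < E.card :=
    Finset.card_image_le.lt_of_ne fun h => hxy (Finset.card_image_iff.mp h hx hy hmerge)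
  have hφ (e : ℕ) : φ e ≡ e + s + s' [MOD Nat.gcd 2 (b - 1)] :=
    (modEq (by omega) _).trans ((modEq (by omega) _).add_right s')
  have hφE : ∀ x ∈ E.image φ, ∀ y ∈ E.image φ, x ≡ y [MOD Nat.gcd 2 (b - 1)] := by
    simp only [Finset.mem_image]
    rintro _ ⟨x, hx, rfl⟩ _ ⟨y, hy, rfl⟩
    exact (hφ x).trans ((((hE x hx y hy).add_right s).add_right s').trans (hφ y).symm)
  have hsync := synchronizable_of_modEq (c := c) hb hv (E.image φ) hφE
  rw [show E.image φ =
      (E.image fun e => sqDigitSum b (e + s)).image fun t => sqDigitSum b (t + s') by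
    rw [Finset.image_image]; rfl] at hsync
  exact (hsync.of_image_sqDigitSum_add (by omega) s').of_image_sqDigitSum_add (by omega) s
termination_by E.card

theorem stmt_14 (c b : ℕ) (hb : 2 ≤ b) (u : ℕ)
    (hu : ∃ v : ℕ, 0 < v ∧ S c b v = u)
    (d : ℕ) (hd : d = Nat.gcd 2 (b - 1)) :
    ∀ N : ℕ, 0 < N → ∃ n : ℕ, 0 < n ∧
      ∀ i : ℕ, i ≤ N - 1 → ∃ k : ℕ, (S c b)^[k] (n + i * d) = u := by
  obtain ⟨v, hv, rfl⟩ := hu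
  intro N hN
  have hE : ∀ x ∈ (Finset.range N).image (· * d), ∀ y ∈ (Finset.range N).image (· * d),
      x ≡ y [MOD Nat.gcd 2 (b - 1)] := by
    simp only [Finset.mem_image, hd]
    rintro _ ⟨i, -, rfl⟩ _ ⟨j, -, rfl⟩
    exact (Nat.modEq_zero_iff_dvd.mpr (dvd_mul_left _ i)).trans
      (Nat.modEq_zero_iff_dvd.mpr (dvd_mul_left _ j)).symm
  obtain ⟨n, hn, hsync⟩ := synchronizable_of_modEq hb hv _ hE 1
  exact ⟨n, hn, fun i hi => hsync _ (Finset.mem_image_of_mem _ (Finset.mem_range.mpr (by omega)))⟩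
end

section
/- Let c and b be odd integers with 1 ≤ c ≤ 9 and 3 ≤ b ≤ 9. Then every finite nonempty set of positive integers is [c,b]-cycle-good. -/
/-- A finite set `T` of positive integers is `[c,b]`-cycle-good if for each cycle of
`S_{[c,b]}` (the orbit of a positive periodic point `u`), there exist `n, k ≥ 1` such
that `S_{[c,b]}^k (t + n)` lies in that cycle for all `t ∈ T`. -/
def CycleGood (c b : ℕ) (T : Finset ℕ) : Prop :=
  ∀ u, 0 < u → (∃ m, 0 < m ∧ (S c b)^[m] u = u) →
    ∃ n k : ℕ, 0 < n ∧ 0 < k ∧ ∀ t ∈ T, ∃ j : ℕ, (S c b)^[k] (t + n) = (S c b)^[j] u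

/-!
Write `s` for the sum of the squared base-`b` digits, so `S c b = c + s`, and call a finite `G`
shiftable into the basin of `u` if a single `n > c` sends every `g + n`, `g ∈ G`, into it.
For `x < b ^ N` one has `s (x + b ^ N * z) = s x + s z`, so a far block of ones raises `s` by any
prescribed amount; hence `G` is shiftable as soon as its image under `g ↦ s (w + g - β)` is.
With `w = β = 0` this pushes every element below `3 (b - 1) ^ 2`, and for two elements at
distance `e` a suitable seed `w` replaces `e` by `|s w - s (w + e)|`. Since `b` is odd,
`s x ≡ x (mod 2)`, so explicit chains of seeds drive each even distance to `0`, where two elements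
merge and the set gets smaller, and each odd one to `1`, where a single pair of consecutive
numbers entering the cycle finishes the argument; among three elements some distance is even.
The chains and one such pair per cycle are checked by computation for the twenty pairs `(c, b)`.
-/

namespace AugmentedHappy

def sqDigitSum (b n : ℕ) : ℕ := ((Nat.digits b n).map (· ^ 2)).sum

theorem S_eq_add_sqDigitSum (c b n : ℕ) : S c b n = c + sqDigitSum b n := rfl

section SqDigitSum

variable {b : ℕ}

@[simp]
theorem sqDigitSum_zero : sqDigitSum b 0 = 0 := by
  simp [sqDigitSum]

theorem sqDigitSum_eq_mod_add_div (hb : 1 < b) (n : ℕ) :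
    sqDigitSum b n = (n % b) ^ 2 + sqDigitSum b (n / b) := by
  rcases Nat.eq_zero_or_pos n with rfl | hn
  · simp
  · simp [sqDigitSum, Nat.digits_def' hb hn]

theorem sqDigitSum_le_mul (hb : 1 < b) {L n : ℕ} (hn : n < b ^ L) :
    sqDigitSum b n ≤ L * (b - 1) ^ 2 := by
  have hdigit : ∀ x ∈ (Nat.digits b n).map (· ^ 2), x ≤ (b - 1) ^ 2 := by
    simp only [List.mem_map]
    rintro _ ⟨d, hd, rfl⟩
    exact Nat.pow_le_pow_left (Nat.le_sub_one_of_lt (Nat.digits_lt_base hb hd)) 2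
  calc sqDigitSum b n ≤ (Nat.digits b n).length * (b - 1) ^ 2 := by
        simpa [sqDigitSum] using List.sum_le_card_nsmul _ _ hdigit
    _ ≤ L * (b - 1) ^ 2 := by
        gcongr
        exact (Nat.digits_length_le_iff hb n).2 hn

theorem add_sqDigitSum_lt (hb : 1 < b) {c : ℕ} (hcb : c + 4 * (b - 1) ^ 2 < b ^ 3) :
    ∀ x, b ^ 3 ≤ x → c + sqDigitSum b x < x := by
  intro x
  induction x using Nat.strong_induction_on with
  | _ x ih =>
    intro hx
    rcases lt_or_ge x (b ^ 4) with hx4 | hx4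
    · have := sqDigitSum_le_mul hb hx4
      omega
    have hq : b ^ 3 ≤ x / b := (Nat.le_div_iff_mul_le (by omega)).2 (by rwa [← pow_succ])
    have ihq := ih (x / b) (Nat.div_lt_self ((pow_pos (by omega) 3).trans_le hx) hb) hq
    have hmod : (x % b) ^ 2 ≤ (b - 1) ^ 2 :=
      Nat.pow_le_pow_left (Nat.le_sub_one_of_lt (Nat.mod_lt _ (by omega))) 2
    have hbq : b - 1 ≤ x / b := ((Nat.sub_le b 1).trans (Nat.le_self_pow (by norm_num) b)).trans hq
    have hdiv : b * (x / b) ≤ x := Nat.mul_div_le x b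
    rw [sqDigitSum_eq_mod_add_div hb]
    obtain ⟨d, rfl⟩ : ∃ d, b = d + 1 := ⟨b - 1, by omega⟩
    simp only [Nat.add_sub_cancel] at hmod hbq
    nlinarith

theorem sqDigitSum_le_or_add_lt (hb : 1 < b) {c : ℕ} (hcb : c + 4 * (b - 1) ^ 2 < b ^ 3)
    (x : ℕ) : sqDigitSum b x ≤ 3 * (b - 1) ^ 2 ∨ c + sqDigitSum b x < x := by
  rcases lt_or_ge x (b ^ 3) with h | h
  · exact Or.inl (sqDigitSum_le_mul hb h)
  · exact Or.inr (add_sqDigitSum_lt hb hcb x h)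

theorem sqDigitSum_add_base_pow_mul (hb : 1 < b) {N a : ℕ} (ha : a < b ^ N) (z : ℕ) :
    sqDigitSum b (a + b ^ N * z) = sqDigitSum b a + sqDigitSum b z := by
  rcases Nat.eq_zero_or_pos z with rfl | hz
  · simp
  have hlen := (Nat.digits_length_le_iff hb a).2 ha
  unfold sqDigitSum
  rw [show N = (Nat.digits b a).length + (N - (Nat.digits b a).length) by omega,
    ← Nat.digits_append_zeroes_append_digits hb hz]
  simp

theorem sqDigitSum_ofDigits_replicate_one (hb : 1 < b) (s : ℕ) :
    sqDigitSum b (Nat.ofDigits b (List.replicate s 1)) = s := by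
  rw [sqDigitSum, Nat.digits_ofDigits b hb _ (by simpa using fun _ => hb) (by simp)]
  simp

theorem exists_sqDigitSum_add_eq (hb : 1 < b) (N : ℕ) {s : ℕ} (hs : 0 < s) :
    ∃ Z, N ≤ Z ∧ ∀ a < N, sqDigitSum b (a + Z) = sqDigitSum b a + s := by
  have hrep := sqDigitSum_ofDigits_replicate_one hb s
  have hpos : 0 < Nat.ofDigits b (List.replicate s 1) :=
    Nat.pos_of_ne_zero fun h => by rw [h, sqDigitSum_zero] at hrep; omega
  have hN : N < b ^ N := Nat.lt_pow_self hb
  refine ⟨b ^ N * Nat.ofDigits b (List.replicate s 1), ?_, fun a ha => ?_⟩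
  · exact hN.le.trans (Nat.le_mul_of_pos_right _ hpos)
  · rw [sqDigitSum_add_base_pow_mul hb (ha.trans hN), hrep]

end SqDigitSum

section Dynamics

variable {α : Type*} {f : α → α}

variable (f) in
def basin (u : α) : Set α := {x | ∃ k j, f^[k] x = f^[j] u}

theorem mem_basin_of_apply_mem {u x : α} (h : f x ∈ basin f u) : x ∈ basin f u := by
  obtain ⟨k, j, h⟩ := h
  exact ⟨k + 1, j, by rwa [Function.iterate_succ_apply]⟩

theorem basin_iterate_subset (u : α) (i : ℕ) : basin f (f^[i] u) ⊆ basin f u := by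
  rintro x ⟨k, j, h⟩
  exact ⟨k, j + i, by rw [h, Function.iterate_add_apply]⟩

theorem mem_basin_of_mem_iterate {u x : α} {K : ℕ} (h : u ∈ List.iterate f x K) :
    x ∈ basin f u := by
  obtain ⟨m, -, rfl⟩ := List.mem_iterate.1 h
  exact ⟨m, 0, rfl⟩

theorem exists_iterate_eq_of_forall_mem_basin {ι : Type*} (T : Finset ι) (x : ι → α) {u : α}
    (h : ∀ t ∈ T, x t ∈ basin f u) : ∃ k, 0 < k ∧ ∀ t ∈ T, ∃ j, f^[k] (x t) = f^[j] u := by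
  choose! k j hkj using h
  refine ⟨T.sup k + 1, Nat.succ_pos _, fun t ht => ?_⟩
  obtain ⟨d, hd⟩ : ∃ d, T.sup k + 1 = d + k t := ⟨T.sup k + 1 - k t, by
    have : k t ≤ T.sup k := Finset.le_sup ht
    omega⟩
  exact ⟨d + j t, by rw [hd, Function.iterate_add_apply, hkj t ht, Function.iterate_add_apply]⟩

theorem iterate_le_max_sub {g : ℕ → ℕ} {m : ℕ} (hg : ∀ x, g x ≤ m ∨ g x < x) (j x : ℕ) :
    g^[j] x ≤ max m (x - j) := by
  induction j generalizing x with
  | zero => simp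
  | succ j ih =>
    rw [Function.iterate_succ_apply]
    have := ih (g x)
    rcases hg x with h | h <;> omega

end Dynamics

def ShiftsIntoBasin (c b u : ℕ) (G : Finset ℕ) : Prop :=
  ∃ n, c < n ∧ ∀ g ∈ G, g + n ∈ basin (S c b) u

section Shifts

variable {c b u : ℕ} {G H : Finset ℕ}

theorem ShiftsIntoBasin.mono (h : ShiftsIntoBasin c b u H) (hGH : G ⊆ H) :
    ShiftsIntoBasin c b u G :=
  let ⟨n, hcn, hn⟩ := h
  ⟨n, hcn, fun g hg => hn g (hGH hg)⟩

theorem ShiftsIntoBasin.of_basin_subset {r : ℕ} (h : ShiftsIntoBasin c b r G)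
    (hru : basin (S c b) r ⊆ basin (S c b) u) : ShiftsIntoBasin c b u G :=
  let ⟨n, hcn, hn⟩ := h
  ⟨n, hcn, fun g hg => hru (hn g hg)⟩

/-- After padding `w + g - β` with a far block of `n - c` ones, `S` sends it to
`sqDigitSum b (w + g - β) + n`. -/
theorem ShiftsIntoBasin.of_image (hb : 1 < b) {w β : ℕ} (hβ : ∀ g ∈ G, β ≤ w + g)
    (h : ShiftsIntoBasin c b u (G.image fun g => sqDigitSum b (w + g - β))) :
    ShiftsIntoBasin c b u G := by
  obtain ⟨n, hcn, hn⟩ := h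
  obtain ⟨Z, hZ, hZsum⟩ :=
    exists_sqDigitSum_add_eq hb (w + G.sup id + β + c + 1) (s := n - c) (by omega)
  refine ⟨w + Z - β, by omega, fun g hg => mem_basin_of_apply_mem ?_⟩
  have hgsup : g ≤ G.sup id := Finset.le_sup (f := id) hg
  have hgβ := hβ g hg
  rw [show g + (w + Z - β) = (w + g - β) + Z by omega, S_eq_add_sqDigitSum,
    hZsum _ (by omega)]
  convert hn _ (Finset.mem_image_of_mem _ hg) using 1
  omega

theorem ShiftsIntoBasin.of_image_iterate (hb : 1 < b) (j : ℕ)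
    (h : ShiftsIntoBasin c b u (G.image (sqDigitSum b)^[j])) : ShiftsIntoBasin c b u G := by
  induction j generalizing G with
  | zero => simpa using h
  | succ j ih =>
    rw [Function.iterate_succ, ← Finset.image_image] at h
    exact ShiftsIntoBasin.of_image hb (w := 0) (β := 0) (by simp) (by simpa using ih h)

end Shifts

theorem pair_eq_min_add_dist (x y : ℕ) :
    ({x, y} : Finset ℕ) = {min x y, min x y + Nat.dist x y} := by
  rcases le_total x y with h | h
  · rw [min_eq_left h, show x + Nat.dist x y = y by unfold Nat.dist; omega]
  · rw [min_eq_right h, show y + Nat.dist x y = x by unfold Nat.dist; omega, Finset.pair_comm]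

def reduceGap (b : ℕ) (seed : ℕ → ℕ) (e : ℕ) : ℕ :=
  Nat.dist (sqDigitSum b (seed e)) (sqDigitSum b (seed e + e))

section Gaps

variable {c b u : ℕ} {G : Finset ℕ}

theorem ShiftsIntoBasin.pair (hb : 1 < b) {w e : ℕ}
    (h : ShiftsIntoBasin c b u {sqDigitSum b w, sqDigitSum b (w + e)}) (p : ℕ) :
    ShiftsIntoBasin c b u {p, p + e} := by
  refine ShiftsIntoBasin.of_image hb (w := w) (β := p) (by simp; omega) ?_
  convert h using 1
  simp [Finset.image_insert, show w + (p + e) - p = w + e by omega]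

theorem shiftsIntoBasin_pair_of_iterate_reduceGap (hb : 1 < b) (seed : ℕ → ℕ) {t : ℕ}
    (ht : ∀ p, ShiftsIntoBasin c b u {p, p + t}) (k : ℕ) :
    ∀ e, (reduceGap b seed)^[k] e = t → ∀ p, ShiftsIntoBasin c b u {p, p + e} := by
  induction k with
  | zero => rintro e rfl; exact ht
  | succ k ih =>
    intro e he
    rw [Function.iterate_succ_apply] at he
    refine ShiftsIntoBasin.pair hb (w := seed e) ?_
    rw [pair_eq_min_add_dist]
    exact ih _ he _

theorem shiftsIntoBasin_of_iterate_reduceGap_eq_zero (hb : 1 < b) (seed : ℕ → ℕ) (k : ℕ) :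
    ∀ e, (reduceGap b seed)^[k] e = 0 → 0 < e → ∀ G p, p ∈ G → p + e ∈ G →
      (∀ H : Finset ℕ, H.card < G.card → ShiftsIntoBasin c b u H) →
      ShiftsIntoBasin c b u G := by
  induction k with
  | zero => intro e he hpos; simp at he; omega
  | succ k ih =>
    intro e he hpos G p hp hpe hsmall
    rw [Function.iterate_succ_apply] at he
    obtain ⟨Z, hZ, hZsum⟩ := exists_sqDigitSum_add_eq hb (seed e + e + p + 1) (s := 1) one_pos
    set φ := fun g => sqDigitSum b (seed e + Z + g - p)
    have hφp : φ p = sqDigitSum b (seed e) + 1 := by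
      simp only [φ, show seed e + Z + p - p = seed e + Z by omega]
      exact hZsum _ (by omega)
    have hφpe : φ (p + e) = sqDigitSum b (seed e + e) + 1 := by
      simp only [φ, show seed e + Z + (p + e) - p = seed e + e + Z by omega]
      exact hZsum _ (by omega)
    refine ShiftsIntoBasin.of_image hb (w := seed e + Z) (β := p) (fun g _ => by omega) ?_
    have hdist : Nat.dist (φ p) (φ (p + e)) = reduceGap b seed e := by
      rw [hφp, hφpe, Nat.dist_add_add_right]; rfl
    rcases Nat.eq_zero_or_pos (reduceGap b seed e) with h0 | h0
    · refine hsmall _ (lt_of_le_of_ne Finset.card_image_le fun hcard => ?_)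
      have := Finset.card_image_iff.1 hcard hp hpe (Nat.eq_of_dist_eq_zero (hdist.trans h0))
      omega
    · have hpair : ({φ p, φ (p + e)} : Finset ℕ) ⊆ G.image φ := by
        rw [Finset.insert_subset_iff, Finset.singleton_subset_iff]
        exact ⟨Finset.mem_image_of_mem φ hp, Finset.mem_image_of_mem φ hpe⟩
      rw [pair_eq_min_add_dist, hdist, Finset.insert_subset_iff,
        Finset.singleton_subset_iff] at hpair
      exact ih _ he h0 _ _ hpair.1 hpair.2
        fun H hH => hsmall H (hH.trans_le Finset.card_image_le)

end Gaps

section Master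

variable {c b u : ℕ} {G : Finset ℕ}

theorem exists_lt_sub_mod_two_eq_zero (hG : 2 < G.card) :
    ∃ p ∈ G, ∃ q ∈ G, p < q ∧ (q - p) % 2 = 0 := by
  obtain ⟨x, hx, y, hy, hxy, hmod⟩ := Finset.exists_ne_map_eq_of_card_lt_of_maps_to
    (t := Finset.range 2) (f := (· % 2)) (by simpa using hG)
    (fun g _ => by simpa using Nat.mod_lt g two_pos)
  rcases lt_or_gt_of_ne hxy with h | h
  · exact ⟨x, hx, y, hy, h, by omega⟩
  · exact ⟨y, hy, x, hx, h, by omega⟩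

theorem shiftsIntoBasin_of_forall_le (hb : 1 < b) (seed : ℕ → ℕ) {m : ℕ}
    (hgap : ∀ e ≤ m, ∃ k, (reduceGap b seed)^[k] e = e % 2)
    (hone : ∀ p, ShiftsIntoBasin c b u {p, p + 1}) (hG : ∀ g ∈ G, g ≤ m)
    (hsmall : ∀ H : Finset ℕ, H.card < G.card → ShiftsIntoBasin c b u H) :
    ShiftsIntoBasin c b u G := by
  have heven : ∀ p ∈ G, ∀ q ∈ G, p < q → (q - p) % 2 = 0 → ShiftsIntoBasin c b u G := by
    intro p hp q hq hpq hmod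
    obtain ⟨k, hk⟩ := hgap (q - p) (by have := hG q hq; omega)
    exact shiftsIntoBasin_of_iterate_reduceGap_eq_zero hb seed k _ (hk.trans hmod) (by omega) G p
      hp (by rwa [Nat.add_sub_cancel' hpq.le]) hsmall
  have hpair : ∀ p ∈ G, ∀ q ∈ G, p < q → G = {p, q} → ShiftsIntoBasin c b u G := by
    intro p hp q hq hpq hGpq
    rcases Nat.mod_two_eq_zero_or_one (q - p) with hmod | hmod
    · exact heven p hp q hq hpq hmod
    · obtain ⟨k, hk⟩ := hgap (q - p) (by have := hG q hq; omega)
      have := shiftsIntoBasin_pair_of_iterate_reduceGap hb seed hone k _ (hk.trans hmod) p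
      rwa [Nat.add_sub_cancel' hpq.le, ← hGpq] at this
  rcases le_or_gt G.card 1 with h1 | h1
  · obtain ⟨g, hg⟩ := Finset.card_le_one_iff_subset_singleton.1 h1
    exact (hone g).mono (hg.trans (by simp))
  rcases lt_or_eq_of_le (Nat.succ_le_of_lt h1) with h3 | h2
  · obtain ⟨p, hp, q, hq, hpq, hmod⟩ := exists_lt_sub_mod_two_eq_zero h3
    exact heven p hp q hq hpq hmod
  obtain ⟨x, y, hxy, rfl⟩ := Finset.card_eq_two.1 h2.symm
  rcases lt_or_gt_of_ne hxy with h | h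
  · exact hpair x (by simp) y (by simp) h rfl
  · exact hpair y (by simp) x (by simp) h (Finset.pair_comm _ _)

theorem shiftsIntoBasin_of_reduceGap (hb : 1 < b) (hcb : c + 4 * (b - 1) ^ 2 < b ^ 3)
    (seed : ℕ → ℕ) (hgap : ∀ e ≤ 3 * (b - 1) ^ 2, ∃ k, (reduceGap b seed)^[k] e = e % 2)
    (hone : ∀ p, ShiftsIntoBasin c b u {p, p + 1}) (G : Finset ℕ) :
    ShiftsIntoBasin c b u G := by
  induction hcard : G.card using Nat.strong_induction_on generalizing G with
  | _ n ih =>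
    have hdesc (x : ℕ) : sqDigitSum b x ≤ 3 * (b - 1) ^ 2 ∨ sqDigitSum b x < x := by
      have := sqDigitSum_le_or_add_lt hb hcb x
      omega
    refine ShiftsIntoBasin.of_image_iterate hb (G.sup id) ?_
    refine shiftsIntoBasin_of_forall_le hb seed hgap hone ?_
      fun H hH => ih _ (hcard ▸ hH.trans_le Finset.card_image_le) H rfl
    simp only [Finset.mem_image]
    rintro _ ⟨g, hg, rfl⟩
    have := iterate_le_max_sub hdesc (G.sup id) g
    have : g ≤ G.sup id := Finset.le_sup (f := id) hg
    omega

end Master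

/-- `rep` is a point of a cycle, and the squared-digit sums of the consecutive numbers `seed`
and `seed + 1`, shifted by `shift`, both reach `rep`. -/
structure CycleCert where
  rep : ℕ
  seed : ℕ
  shift : ℕ

theorem cycleGood_of_certificates {c b : ℕ} (hb : 1 < b) (hcb : c + 4 * (b - 1) ^ 2 < b ^ 3)
    (seed : ℕ → ℕ) (hgap : ∀ e ≤ 3 * (b - 1) ^ 2, ∃ k, (reduceGap b seed)^[k] e = e % 2)
    (certs : List CycleCert) (K : ℕ)
    (hcover : ∀ y ≤ c + 3 * (b - 1) ^ 2, ∃ C ∈ certs, C.rep ∈ List.iterate (S c b) y K)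
    (hcert : ∀ C ∈ certs, c < C.shift ∧
      C.rep ∈ List.iterate (S c b) (sqDigitSum b C.seed + C.shift) K ∧
      C.rep ∈ List.iterate (S c b) (sqDigitSum b (C.seed + 1) + C.shift) K)
    (T : Finset ℕ) : CycleGood c b T := by
  intro u _ _
  have hdesc (x : ℕ) : S c b x ≤ c + 3 * (b - 1) ^ 2 ∨ S c b x < x := by
    have := sqDigitSum_le_or_add_lt hb hcb x
    rw [S_eq_add_sqDigitSum]
    omega
  obtain ⟨C, hC, hrep⟩ := hcover _ (by simpa using iterate_le_max_sub hdesc u u)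
  have hbasin : basin (S c b) C.rep ⊆ basin (S c b) u := by
    obtain ⟨m, -, hm⟩ := List.mem_iterate.1 hrep
    rw [hm, ← Function.iterate_add_apply]
    exact basin_iterate_subset u _
  obtain ⟨hshift, hseed, hseed'⟩ := hcert C hC
  have hone (p : ℕ) : ShiftsIntoBasin c b u {p, p + 1} := by
    refine ShiftsIntoBasin.pair hb (w := C.seed) ?_ p
    refine ShiftsIntoBasin.of_basin_subset ⟨C.shift, hshift, ?_⟩ hbasin
    simpa using ⟨mem_basin_of_mem_iterate hseed, mem_basin_of_mem_iterate hseed'⟩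
  obtain ⟨n, hcn, hn⟩ := shiftsIntoBasin_of_reduceGap hb hcb seed hgap hone T
  obtain ⟨k, hk, hkT⟩ := exists_iterate_eq_of_forall_mem_basin T (· + n) hn
  exact ⟨n, k, by omega, hk, hkT⟩

def gapSeeds : ℕ → List ℕ
  | 3 => [0, 0, 1, 0, 2, 2, 3, 3, 1, 0, 5, 1, 6]
  | 5 => [0, 0, 0, 7, 1, 0, 1, 8, 2, 2, 0, 9, 3, 3, 61, 35, 4, 4, 45, 6, 5, 5, 15, 27, 1, 0, 1, 18,
      7, 1, 5, 39, 8, 2, 3, 40, 9, 3, 29, 11, 10, 4, 15, 7, 7, 10, 15, 20, 2]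
  | 7 => [0, 0, 0, 3, 31, 9, 1, 0, 1, 0, 25, 10, 2, 2, 0, 0, 137, 11, 3, 3, 5, 21, 131, 12, 4, 4,
      5, 218, 217, 13, 5, 5, 92, 42, 113, 63, 6, 6, 36, 35, 107, 8, 7, 7, 21, 35, 199, 51, 1, 0, 1,
      0, 137, 24, 9, 1, 7, 1, 131, 25, 10, 2, 3, 0, 186, 39, 11, 3, 12, 5, 175, 33, 12, 4, 62, 5,
      121, 70, 13, 5, 133, 6, 65, 15, 14, 6, 21, 28, 42, 9, 9, 14, 21, 28, 151, 52, 2, 2, 0, 0,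
      180, 39, 17, 2, 3, 0, 181, 33, 18]
  | 9 => [0, 0, 1, 0, 0, 67, 39, 11, 1, 0, 2, 0, 1, 50, 31, 12, 2, 2, 9, 0, 0, 392, 67, 13, 3, 3,
      5, 0, 2, 43, 43, 14, 4, 4, 5, 8, 0, 376, 50, 15, 5, 5, 316, 7, 0, 603, 43, 16, 6, 6, 17, 73,
      515, 352, 351, 17, 7, 7, 65, 8, 153, 263, 181, 99, 8, 8, 46, 45, 153, 336, 173, 10, 9, 9, 27,
      45, 0, 571, 327, 83, 1, 0, 2, 0, 1, 392, 67, 30, 11, 1, 18, 1, 0, 303, 50, 31, 12, 2, 3, 0,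
      0, 376, 123, 42, 13, 3, 14, 5, 9, 385, 43, 43, 14, 4, 25, 5, 533, 450, 213, 49, 15, 5, 107,
      6, 89, 280, 279, 41, 16, 6, 126, 17, 63, 191, 191, 108, 17, 7, 207, 45, 73, 72, 101, 19, 18,
      8, 27, 36, 54, 72, 183, 11, 11, 18, 27, 36, 63, 410, 247, 84, 2, 2, 81, 0, 0, 393, 221, 49,
      21, 2, 3, 0, 0, 385, 141, 41, 22, 3, 3, 4, 0, 394, 231, 42, 23, 23, 154, 4, 7, 3528, 223, 60,
      24]
  | _ => []

def cycleCerts : ℕ → ℕ → List CycleCert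
  | 1, 3 => [⟨5, 0, 2⟩]
  | 1, 5 => [⟨2, 0, 2⟩]
  | 1, 7 => [⟨10, 1, 2⟩, ⟨26, 0, 4⟩]
  | 1, 9 => [⟨3, 0, 2⟩]
  | 3, 3 => [⟨8, 0, 4⟩]
  | 3, 5 => [⟨13, 0, 4⟩]
  | 3, 7 => [⟨19, 0, 4⟩, ⟨20, 3, 4⟩]
  | 3, 9 => [⟨4, 0, 4⟩]
  | 5, 3 => [⟨6, 0, 53⟩, ⟨7, 1, 6⟩, ⟨8, 8, 12⟩]
  | 5, 5 => [⟨6, 0, 6⟩]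
  | 5, 7 => [⟨6, 0, 6⟩, ⟨10, 2, 6⟩, ⟨25, 2, 8⟩]
  | 5, 9 => [⟨23, 0, 6⟩, ⟨26, 7, 25⟩, ⟨42, 3, 6⟩, ⟨80, 53, 44⟩]
  | 7, 3 => [⟨8, 0, 8⟩]
  | 7, 5 => [⟨13, 0, 8⟩]
  | 7, 7 => [⟨20, 0, 8⟩]
  | 7, 9 => [⟨8, 0, 8⟩, ⟨23, 5, 11⟩, ⟨41, 4, 15⟩, ⟨44, 2, 11⟩]
  | 9, 3 => [⟨14, 0, 10⟩]
  | 9, 5 => [⟨11, 0, 10⟩]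
  | 9, 7 => [⟨34, 0, 10⟩]
  | 9, 9 => [⟨11, 0, 10⟩, ⟨22, 3, 13⟩]
  | _, _ => []

set_option maxRecDepth 100000 in
theorem reduceGap_gapSeeds : ∀ b ∈ [3, 5, 7, 9], ∀ e ≤ 3 * (b - 1) ^ 2,
    ∃ k ≤ 2, (reduceGap b fun e => (gapSeeds b).getD e 0)^[k] e = e % 2 := by
  decide +kernel

set_option maxRecDepth 100000 in
theorem cycleCerts_cover : ∀ c ∈ [1, 3, 5, 7, 9], ∀ b ∈ [3, 5, 7, 9],
    ∀ y ≤ c + 3 * (b - 1) ^ 2, ∃ C ∈ cycleCerts c b, C.rep ∈ List.iterate (S c b) y 16 := by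
  decide +kernel

set_option maxRecDepth 100000 in
theorem cycleCerts_valid : ∀ c ∈ [1, 3, 5, 7, 9], ∀ b ∈ [3, 5, 7, 9], ∀ C ∈ cycleCerts c b,
    c < C.shift ∧ C.rep ∈ List.iterate (S c b) (sqDigitSum b C.seed + C.shift) 16 ∧
      C.rep ∈ List.iterate (S c b) (sqDigitSum b (C.seed + 1) + C.shift) 16 := by
  decide +kernel

end AugmentedHappy

theorem stmt_18_general (c b : ℕ) (hc : Odd c) (hbo : Odd b)
    (hc9 : 1 ≤ c ∧ c ≤ 9) (hb9 : 3 ≤ b ∧ b ≤ 9)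
    (T : Finset ℕ) :
    CycleGood c b T := by
  have hcs : c ∈ [1, 3, 5, 7, 9] := by
    obtain ⟨k, rfl⟩ := hc
    simp only [List.mem_cons, List.not_mem_nil]
    omega
  have hbs : b ∈ [3, 5, 7, 9] := by
    obtain ⟨k, rfl⟩ := hbo
    simp only [List.mem_cons, List.not_mem_nil]
    omega
  have hcb : c + 4 * (b - 1) ^ 2 < b ^ 3 := by
    simp only [List.mem_cons, List.not_mem_nil, or_false] at hbs
    rcases hbs with rfl | rfl | rfl | rfl <;> omega
  exact AugmentedHappy.cycleGood_of_certificates (by omega) hcb _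
    (fun e he => (AugmentedHappy.reduceGap_gapSeeds b hbs e he).imp fun _ => And.right) _ 16
    (AugmentedHappy.cycleCerts_cover c hcs b hbs) (AugmentedHappy.cycleCerts_valid c hcs b hbs) T

theorem stmt_18 (c b : ℕ) (hc : Odd c) (hbo : Odd b)
    (hc9 : 1 ≤ c ∧ c ≤ 9) (hb9 : 3 ≤ b ∧ b ≤ 9)
    (T : Finset ℕ) (hpos : ∀ t ∈ T, 0 < t) (hne : T.Nonempty) :
    CycleGood c b T :=
  stmt_18_general c b hc hbo hc9 hb9 T
end
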